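/- arXiv:2005.08329 — 3 statements merged into one kernel-verified Lean document; each statement's English description precedes it below -/
import Mathlib

section
/- Any linear operator ζ on the ring of symmetric functions of the form ζ(s_λ) = Σ a_{λ,λ'} s_{λ'} (sum over diagrams λ' obtained from λ by removing one box, with rational coefficients a_{λ,λ'}) that satisfies the Leibniz rule ζ(s_λ s_μ) = ζ(s_λ)s_μ + s_λ ζ(s_μ) for all partitions λ, μ is a rational linear combination of ξ and ∇. -/
/-- `Covers μ lam` : `μ` is obtained from `lam` by deleting a single box. -/
def Covers (mu lam : YoungDiagram) : Prop :=
  mu.cells ⊆ lam.cells ∧ lam.cells.card = mu.cells.card + 1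

/-- The sum of the contents `j - i` of the boxes of `lam` that are not in `mu`. -/
def remContent (mu lam : YoungDiagram) : ℤ :=
  ∑ c ∈ lam.cells \ mu.cells, ((c.2 : ℤ) - (c.1 : ℤ))

instance (mu lam : YoungDiagram) : Decidable (Covers mu lam) := by
  unfold Covers; infer_instance

instance : DecidableEq YoungDiagram :=
  fun a b => decidable_of_iff (a.cells = b.cells) (YoungDiagram.ext_iff).symm
/-- The one-row Young diagram `(k)`. -/
def rowYD (k : ℕ) : YoungDiagram := YoungDiagram.ofRowLens [k] (by simp [List.sortedGE_iff_pairwise])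

/-- The hook-shaped Young diagram `(r, 1^a)` (for `r ≥ 1`). -/
def hookYD (r a : ℕ) : YoungDiagram where
  cells := ((Finset.range r).image fun j => (0, j)) ∪
    ((Finset.range (a + 1)).image fun i => (i, 0))
  isLowerSet := by
    intro x y hxy hy
    obtain ⟨h1, h2⟩ : y.1 ≤ x.1 ∧ y.2 ≤ x.2 := Prod.le_def.mp hxy
    simp only [Finset.coe_union, Finset.coe_image, Finset.coe_range, Set.mem_union,
      Set.mem_image, Set.mem_Iio] at hy ⊢
    rcases hy with ⟨j, hj, hje⟩ | ⟨i, hi, hie⟩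
    · have hx1 : x.1 = 0 := by rw [← hje]
      have hx2 : x.2 = j := by rw [← hje]
      left
      exact ⟨y.2, by omega, by
        have hy1 : y.1 = 0 := by omega
        rw [Prod.ext_iff]; exact ⟨hy1.symm, rfl⟩⟩
    · have hx1 : x.1 = i := by rw [← hie]
      have hx2 : x.2 = 0 := by rw [← hie]
      right
      exact ⟨y.1, by omega, by
        have hy2 : y.2 = 0 := by omega
        rw [Prod.ext_iff]; exact ⟨rfl, hy2.symm⟩⟩

/-- `mu / lam` is a horizontal strip: no two of its boxes lie in the same column. -/
def IsHStrip (lam mu : YoungDiagram) : Prop :=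
  lam.cells ⊆ mu.cells ∧ ∀ c ∈ mu.cells, c ∉ lam.cells → (c.1 + 1, c.2) ∉ mu.cells

instance (lam mu : YoungDiagram) : Decidable (IsHStrip lam mu) := by
  unfold IsHStrip; infer_instance

namespace BoxLeib

/-- The full rectangle with rows `0..i` and columns `0..j`. -/
def rect (i j : ℕ) : YoungDiagram where
  cells := Finset.range (i+1) ×ˢ Finset.range (j+1)
  isLowerSet := by
    rintro ⟨a, b⟩ ⟨c, d⟩ h hm
    obtain ⟨h1, h2⟩ := Prod.le_def.mp h
    simp only [Finset.coe_product, Set.mem_prod, Finset.mem_coe, Finset.mem_range] at hm ⊢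
    omega

lemma mem_rect {i j : ℕ} {c : ℕ × ℕ} : c ∈ (rect i j).cells ↔ c.1 ≤ i ∧ c.2 ≤ j := by
  show c ∈ Finset.range (i+1) ×ˢ Finset.range (j+1) ↔ _
  simp [Finset.mem_product, Nat.lt_succ_iff]

lemma card_rect (i j : ℕ) : (rect i j).cells.card = (i+1) * (j+1) := by
  show (Finset.range (i+1) ×ˢ Finset.range (j+1)).card = _
  simp [Finset.card_product]

/-- downward closure, cell form -/
lemma lower (ν : YoungDiagram) {a b : ℕ × ℕ} (h : b ≤ a) (ha : a ∈ ν.cells) :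
    b ∈ ν.cells := by
  rw [YoungDiagram.mem_cells] at ha ⊢
  exact ν.up_left_mem (Prod.le_def.mp h).1 (Prod.le_def.mp h).2 (by simpa using ha)

/-- Erase a maximal cell from a Young diagram. -/
def eraseYD (ν : YoungDiagram) (x : ℕ × ℕ) (h1 : (x.1+1, x.2) ∉ ν.cells)
    (h2 : (x.1, x.2+1) ∉ ν.cells) : YoungDiagram where
  cells := ν.cells.erase x
  isLowerSet := by
    intro a b hba ha
    simp only [Finset.coe_erase, Set.mem_diff, Finset.mem_coe, Set.mem_singleton_iff] at ha ⊢
    obtain ⟨haν, hax⟩ := ha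
    refine ⟨lower ν hba haν, ?_⟩
    rintro rfl
    obtain ⟨l1, l2⟩ := Prod.le_def.mp hba
    have hne : b.1 < a.1 ∨ b.2 < a.2 := by
      rcases Nat.lt_or_ge b.1 a.1 with h | h
      · exact Or.inl h
      · rcases Nat.lt_or_ge b.2 a.2 with h' | h'
        · exact Or.inr h'
        · exact absurd (Prod.ext (le_antisymm l1 h).symm (le_antisymm l2 h').symm) hax
    rcases hne with h | h
    · exact h1 (lower ν (Prod.le_def.mpr ⟨by omega, by simpa using l2⟩) haν)
    · exact h2 (lower ν (Prod.le_def.mpr ⟨by simpa using l1, by omega⟩) haν)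

lemma cells_eraseYD (ν : YoungDiagram) (x : ℕ × ℕ) (h1 h2) :
    (eraseYD ν x h1 h2).cells = ν.cells.erase x := rfl

lemma covers_sdiff {mu lam : YoungDiagram} (h : Covers mu lam) :
    ∃ x, lam.cells \ mu.cells = {x} := by
  apply Finset.card_eq_one.mp
  rw [Finset.card_sdiff_of_subset h.1, h.2]
  simp

lemma sdiff_mem {mu lam : YoungDiagram} {x : ℕ × ℕ}
    (hs : lam.cells \ mu.cells = {x}) : x ∈ lam.cells ∧ x ∉ mu.cells := by
  have : x ∈ lam.cells \ mu.cells := by rw [hs]; exact Finset.mem_singleton_self x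
  exact Finset.mem_sdiff.mp this

lemma mem_of_not_sdiff {mu lam : YoungDiagram} {x : ℕ × ℕ}
    (hs : lam.cells \ mu.cells = {x}) {z : ℕ × ℕ} (hz : z ∈ lam.cells) (hzx : z ≠ x) :
    z ∈ mu.cells := by
  by_contra h
  exact hzx (Finset.mem_singleton.mp (hs ▸ Finset.mem_sdiff.mpr ⟨hz, h⟩))

/-- the removed cell of a cover is maximal -/
lemma sdiff_maximal {mu lam : YoungDiagram} (hc : Covers mu lam) {x : ℕ × ℕ}
    (hs : lam.cells \ mu.cells = {x}) :
    (x.1+1, x.2) ∉ lam.cells ∧ (x.1, x.2+1) ∉ lam.cells := by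
  obtain ⟨hxl, hxm⟩ := sdiff_mem hs
  constructor
  · intro hmem
    have h1 : (x.1+1, x.2) ∈ mu.cells := mem_of_not_sdiff hs hmem (by simp [Prod.ext_iff])
    exact hxm (lower mu (show x ≤ (x.1+1, x.2) from Prod.le_def.mpr ⟨by omega, by omega⟩) h1)
  · intro hmem
    have h1 : (x.1, x.2+1) ∈ mu.cells := mem_of_not_sdiff hs hmem (by simp [Prod.ext_iff])
    exact hxm (lower mu (show x ≤ (x.1, x.2+1) from Prod.le_def.mpr ⟨by omega, by omega⟩) h1)

lemma covers_cells_eq {mu lam : YoungDiagram} (hc : Covers mu lam) {x : ℕ × ℕ}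
    (hs : lam.cells \ mu.cells = {x}) : mu.cells = lam.cells.erase x := by
  ext z
  simp only [Finset.mem_erase]
  constructor
  · intro hz
    exact ⟨fun h => (sdiff_mem hs).2 (h ▸ hz), hc.1 hz⟩
  · rintro ⟨hzx, hzl⟩
    exact mem_of_not_sdiff hs hzl hzx

def rectErase (i j : ℕ) : YoungDiagram :=
  eraseYD (rect i j) (i, j) (by simp only [mem_rect]; omega) (by simp only [mem_rect]; omega)

lemma cells_rectErase (i j : ℕ) :
    (rectErase i j).cells = (rect i j).cells.erase (i, j) := rfl

lemma covers_rectErase (i j : ℕ) : Covers (rectErase i j) (rect i j) := by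
  constructor
  · exact Finset.erase_subset _ _
  · rw [cells_rectErase, Finset.card_erase_of_mem (by simp only [mem_rect]; omega)]
    have h1 := card_rect i j
    have h2 : 0 < (i+1) * (j+1) := Nat.mul_pos (by omega) (by omega)
    omega

lemma rect_covers_unique {i j : ℕ} {mu : YoungDiagram} (h : Covers mu (rect i j)) :
    mu = rectErase i j := by
  obtain ⟨x, hs⟩ := covers_sdiff h
  have hx : x = (i, j) := by
    by_contra hne
    have hxr : x ∈ (rect i j).cells := (sdiff_mem hs).1
    have hij : (i, j) ∈ mu.cells :=
      mem_of_not_sdiff hs (by simp only [mem_rect]; omega) (fun h' => hne h'.symm)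
    have hle : x ≤ (i, j) := Prod.le_def.mpr (mem_rect.mp hxr)
    exact (sdiff_mem hs).2 (lower mu hle hij)
  apply YoungDiagram.ext
  rw [covers_cells_eq h hs, hx, cells_rectErase]

/-- rect with one extra box at the right end of the first row -/
def rectR (i j : ℕ) : YoungDiagram where
  cells := insert (0, j+1) (rect i j).cells
  isLowerSet := by
    intro a b hba ha
    simp only [Finset.coe_insert, Set.mem_insert_iff, Finset.mem_coe] at ha ⊢
    obtain ⟨l1, l2⟩ := Prod.le_def.mp hba
    rcases ha with rfl | ha
    · simp only at l1 l2
      rcases Nat.lt_or_ge b.2 (j+1) with h | h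
      · exact Or.inr (mem_rect.mpr ⟨by omega, by omega⟩)
      · left
        have : b.2 = j + 1 := by omega
        exact Prod.ext (by omega) this
    · exact Or.inr (lower _ hba ha)

/-- rect with one extra box at the bottom of the first column -/
def rectB (i j : ℕ) : YoungDiagram where
  cells := insert (i+1, 0) (rect i j).cells
  isLowerSet := by
    intro a b hba ha
    simp only [Finset.coe_insert, Set.mem_insert_iff, Finset.mem_coe] at ha ⊢
    obtain ⟨l1, l2⟩ := Prod.le_def.mp hba
    rcases ha with rfl | ha
    · simp only at l1 l2
      rcases Nat.lt_or_ge b.1 (i+1) with h | h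
      · exact Or.inr (mem_rect.mpr ⟨by omega, by omega⟩)
      · left
        have : b.1 = i + 1 := by omega
        exact Prod.ext this (by omega)
    · exact Or.inr (lower _ hba ha)

lemma cells_rectR (i j : ℕ) : (rectR i j).cells = insert (0, j+1) (rect i j).cells := rfl
lemma cells_rectB (i j : ℕ) : (rectB i j).cells = insert (i+1, 0) (rect i j).cells := rfl

lemma notmem_rectR_box (i j : ℕ) : (0, j+1) ∉ (rect i j).cells := by
  simp only [mem_rect]; omega
lemma notmem_rectB_box (i j : ℕ) : (i+1, 0) ∉ (rect i j).cells := by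
  simp only [mem_rect]; omega

lemma covers_rect_rectR (i j : ℕ) : Covers (rect i j) (rectR i j) := by
  constructor
  · rw [cells_rectR]; exact Finset.subset_insert _ _
  · rw [cells_rectR, Finset.card_insert_of_notMem (notmem_rectR_box i j)]

lemma covers_rect_rectB (i j : ℕ) : Covers (rect i j) (rectB i j) := by
  constructor
  · rw [cells_rectB]; exact Finset.subset_insert _ _
  · rw [cells_rectB, Finset.card_insert_of_notMem (notmem_rectB_box i j)]

lemma sdiff_rectR (i j : ℕ) : (rectR i j).cells \ (rect i j).cells = {(0, j+1)} := by
  rw [cells_rectR]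
  ext z
  simp only [Finset.mem_sdiff, Finset.mem_insert, Finset.mem_singleton]
  constructor
  · rintro ⟨rfl | hz, hz2⟩
    · rfl
    · exact absurd hz hz2
  · rintro rfl
    exact ⟨Or.inl rfl, notmem_rectR_box i j⟩

lemma sdiff_rectB (i j : ℕ) : (rectB i j).cells \ (rect i j).cells = {(i+1, 0)} := by
  rw [cells_rectB]
  ext z
  simp only [Finset.mem_sdiff, Finset.mem_insert, Finset.mem_singleton]
  constructor
  · rintro ⟨rfl | hz, hz2⟩
    · rfl
    · exact absurd hz hz2
  · rintro rfl
    exact ⟨Or.inl rfl, notmem_rectB_box i j⟩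

lemma rectR_ne_rectB (i j : ℕ) : rectR i j ≠ rectB i j := by
  intro h
  have : (0, j+1) ∈ (rectB i j).cells := by
    rw [← h, cells_rectR]; exact Finset.mem_insert_self _ _
  rw [cells_rectB, Finset.mem_insert] at this
  rcases this with h' | h'
  · exact absurd (Prod.ext_iff.mp h').1 (by omega)
  · exact notmem_rectR_box i j h'

lemma rect_covered_unique {i j : ℕ} {nu : YoungDiagram} (h : Covers (rect i j) nu) :
    nu = rectR i j ∨ nu = rectB i j := by
  obtain ⟨x, hs⟩ := covers_sdiff h
  have hcells : nu.cells = insert x (rect i j).cells := by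
    ext z
    simp only [Finset.mem_insert]
    constructor
    · intro hz
      by_cases hzx : z = x
      · exact Or.inl hzx
      · exact Or.inr (mem_of_not_sdiff hs hz hzx)
    · rintro (rfl | hz)
      · exact (sdiff_mem hs).1
      · exact h.1 hz
  obtain ⟨hxn, hxr⟩ := sdiff_mem hs
  obtain ⟨p, q⟩ := x
  have hpq : ¬(p ≤ i ∧ q ≤ j) := fun hc => hxr (mem_rect.mpr hc)
  have hkey : (p = 0 ∧ q = j+1) ∨ (p = i+1 ∧ q = 0) := by
    rcases Nat.lt_or_ge j q with hq | hq
    · -- q > j ⇒ p = 0 and q = j+1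
      have hp0 : p = 0 := by
        by_contra hp
        have hm : (p-1, q) ∈ nu.cells :=
          lower nu (show ((p-1 : ℕ), q) ≤ (p, q) from Prod.le_def.mpr ⟨by omega, by omega⟩) hxn
        have : (p-1, q) ∈ (rect i j).cells :=
          mem_of_not_sdiff hs hm (by simp [Prod.ext_iff]; omega)
        exact absurd (mem_rect.mp this).2 (by omega)
      have hq1 : q = j+1 := by
        by_contra hq1
        have hm : (p, q-1) ∈ nu.cells :=
          lower nu (show (p, (q-1 : ℕ)) ≤ (p, q) from Prod.le_def.mpr ⟨by omega, by omega⟩) hxn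
        have : (p, q-1) ∈ (rect i j).cells :=
          mem_of_not_sdiff hs hm (by simp [Prod.ext_iff]; omega)
        exact absurd (mem_rect.mp this).2 (by omega)
      exact Or.inl ⟨hp0, hq1⟩
    · -- q ≤ j so p > i ⇒ q = 0 and p = i+1
      have hpi : i < p := by omega
      have hq0 : q = 0 := by
        by_contra hq0
        have hm : (p, q-1) ∈ nu.cells :=
          lower nu (show (p, (q-1 : ℕ)) ≤ (p, q) from Prod.le_def.mpr ⟨by omega, by omega⟩) hxn
        have : (p, q-1) ∈ (rect i j).cells :=
          mem_of_not_sdiff hs hm (by simp [Prod.ext_iff]; omega)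
        exact absurd (mem_rect.mp this).1 (by omega)
      have hp1 : p = i+1 := by
        by_contra hp1
        have hm : (p-1, q) ∈ nu.cells :=
          lower nu (show ((p-1 : ℕ), q) ≤ (p, q) from Prod.le_def.mpr ⟨by omega, by omega⟩) hxn
        have : (p-1, q) ∈ (rect i j).cells :=
          mem_of_not_sdiff hs hm (by simp [Prod.ext_iff]; omega)
        exact absurd (mem_rect.mp this).1 (by omega)
      exact Or.inr ⟨hp1, hq0⟩
  rcases hkey with ⟨rfl, rfl⟩ | ⟨rfl, rfl⟩
  · exact Or.inl (YoungDiagram.ext (by rw [hcells, cells_rectR]))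
  · exact Or.inr (YoungDiagram.ext (by rw [hcells, cells_rectB]))

end BoxLeib

/-- Every degree `-1` operator supported on single-box removals in the Schur basis that
satisfies the Leibniz rule is a rational linear combination of `ξ` and `∇`. -/
theorem box_removal_leibniz_operators
    {L : Type*} [CommRing L] [Algebra ℚ L]
    (s : Module.Basis YoungDiagram ℚ L)
    (hone : s (⊥ : YoungDiagram) = 1)
    (hPieri : ∀ (k : ℕ) (lam mu : YoungDiagram),
      s.repr (s (rowYD k) * s lam) mu =
        if mu.cells.card = lam.cells.card + k ∧ IsHStrip lam mu then 1 else 0)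
    (xi : Module.End ℚ L)
    (hxi : ∀ lam mu : YoungDiagram,
      s.repr (xi (s lam)) mu = if Covers mu lam then 1 else 0)
    (nabla : Module.End ℚ L)
    (hnabla : ∀ lam mu : YoungDiagram,
      s.repr (nabla (s lam)) mu =
        if Covers mu lam then (remContent mu lam : ℚ) else 0)
    (zeta : Module.End ℚ L)
    (hzeta : ∀ lam mu : YoungDiagram, ¬ Covers mu lam → s.repr (zeta (s lam)) mu = 0)
    (hleib : ∀ f g : L, zeta (f * g) = zeta f * g + f * zeta g) :
    ∃ a b : ℚ, zeta = a • xi + b • nabla := by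
  classical
  open BoxLeib in
  -- Pieri rule for k = 1 in terms of `Covers`
  have hP1 : ∀ lam mu : YoungDiagram,
      s.repr (s (rowYD 1) * s lam) mu = if Covers lam mu then 1 else 0 := by
    intro lam mu
    rw [hPieri 1 lam mu]
    by_cases h : Covers lam mu
    · rw [if_pos h, if_pos]
      refine ⟨h.2, h.1, ?_⟩
      intro c hc hcl hmem
      obtain ⟨x, hs⟩ := BoxLeib.covers_sdiff h
      have hcx : c = x := Finset.mem_singleton.mp (hs ▸ Finset.mem_sdiff.mpr ⟨hc, hcl⟩)
      have hm := (BoxLeib.sdiff_maximal h hs).1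
      rw [hcx] at hmem
      exact hm hmem
    · rw [if_neg h, if_neg]
      intro hc
      exact h ⟨hc.2.1, hc.1⟩
  have hrow1 : rowYD 1 = BoxLeib.rect 0 0 := by
    apply YoungDiagram.ext
    decide
  have hbot : BoxLeib.rectErase 0 0 = (⊥ : YoungDiagram) := by
    apply YoungDiagram.ext
    rw [YoungDiagram.cells_bot]
    decide
  set c1 : ℚ := s.repr (zeta (s (rowYD 1))) ⊥ with hc1def
  -- zeta on h_1
  have hcard1 : (rowYD 1).cells.card = 1 := by decide
  have hzh1 : zeta (s (rowYD 1)) = c1 • (1 : L) := by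
    apply Module.Basis.ext_elem s
    intro mu
    rw [map_smul, ← hone, Module.Basis.repr_self, Finsupp.smul_apply, Finsupp.single_apply,
      smul_eq_mul]
    by_cases hmu : mu = ⊥
    · subst hmu
      rw [if_pos rfl, mul_one]
    · rw [if_neg (fun h => hmu h.symm), mul_zero]
      apply hzeta
      intro hcov
      apply hmu
      apply YoungDiagram.ext
      rw [YoungDiagram.cells_bot, ← Finset.card_eq_zero]
      have := hcov.2
      omega
  -- master Leibniz/Pieri identity
  have hE : ∀ lam ρ : YoungDiagram,
      ((s.repr (s (rowYD 1) * s lam)).sum fun ν c => c * s.repr (zeta (s ν)) ρ)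
        = c1 * (if lam = ρ then 1 else 0)
          + ((s.repr (zeta (s lam))).sum fun μ c => c * (if Covers μ ρ then 1 else 0)) := by
    intro lam ρ
    have key : s.repr (zeta (s (rowYD 1) * s lam)) ρ
        = (s.repr (s (rowYD 1) * s lam)).sum fun ν c => c * s.repr (zeta (s ν)) ρ := by
      conv_lhs => rw [← Module.Basis.linearCombination_repr s (s (rowYD 1) * s lam),
        Finsupp.linearCombination_apply]
      rw [map_finsuppSum, map_finsuppSum, Finsupp.sum_apply]
      apply Finsupp.sum_congr
      intro ν _
      rw [map_smul, map_smul, Finsupp.smul_apply, smul_eq_mul]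
    rw [← key, hleib, map_add, Finsupp.add_apply]
    congr 1
    · rw [hzh1, smul_mul_assoc, one_mul, map_smul, Finsupp.smul_apply, Module.Basis.repr_self,
        Finsupp.single_apply, smul_eq_mul]
    · conv_lhs => rw [← Module.Basis.linearCombination_repr s (zeta (s lam)),
        Finsupp.linearCombination_apply]
      rw [Finsupp.mul_sum, map_finsuppSum, Finsupp.sum_apply]
      apply Finsupp.sum_congr
      intro μ _
      rw [mul_smul_comm, map_smul, Finsupp.smul_apply, smul_eq_mul, hP1]
  -- the "move one box" relation
  have hmove : ∀ nu lam ρ μ : YoungDiagram, Covers lam nu → Covers ρ nu → lam ≠ ρ →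
      Covers μ lam → Covers μ ρ →
      s.repr (zeta (s nu)) ρ = s.repr (zeta (s lam)) μ := by
    intro nu lam ρ μ h1 h2 hne h3 h4
    have hcardlam : lam.cells.card = ρ.cells.card := by
      have := h1.2; have := h2.2; omega
    have hcapcard : (lam.cells ∩ ρ.cells).card = μ.cells.card := by
      have hsub : μ.cells ⊆ lam.cells ∩ ρ.cells := Finset.subset_inter h3.1 h4.1
      have hlt : (lam.cells ∩ ρ.cells).card < lam.cells.card := by
        rcases lt_or_eq_of_le (Finset.card_le_card (Finset.inter_subset_left :
          lam.cells ∩ ρ.cells ⊆ lam.cells)) with h | h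
        · exact h
        · exfalso
          have hll : lam.cells ⊆ ρ.cells := by
            have : lam.cells ∩ ρ.cells = lam.cells :=
              Finset.eq_of_subset_of_card_le Finset.inter_subset_left (le_of_eq h.symm)
            intro z hz
            rw [← this] at hz
            exact (Finset.mem_inter.mp hz).2
          exact hne (YoungDiagram.ext (Finset.eq_of_subset_of_card_le hll (le_of_eq hcardlam.symm)))
      have := Finset.card_le_card hsub
      have := h3.2
      omega
    have hcap : lam.cells ∩ ρ.cells = μ.cells :=
      (Finset.eq_of_subset_of_card_le (Finset.subset_inter h3.1 h4.1)
        (le_of_eq hcapcard)).symm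
    have hcupcard : (lam.cells ∪ ρ.cells).card = nu.cells.card := by
      have := Finset.card_inter_add_card_union lam.cells ρ.cells
      have := h1.2; have := h3.2
      omega
    have hcup : lam.cells ∪ ρ.cells = nu.cells :=
      Finset.eq_of_subset_of_card_le (Finset.union_subset h1.1 h2.1) (le_of_eq hcupcard.symm)
    have hupunique : ∀ b : YoungDiagram, Covers lam b → Covers ρ b → b = nu := by
      intro b hb1 hb2
      apply YoungDiagram.ext
      rw [← hcup]
      refine (Finset.eq_of_subset_of_card_le (Finset.union_subset hb1.1 hb2.1) ?_).symm
      rw [hcupcard]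
      have := hb1.2; have := h1.2
      omega
    have hdownunique : ∀ b : YoungDiagram, Covers b lam → Covers b ρ → b = μ := by
      intro b hb1 hb2
      apply YoungDiagram.ext
      rw [← hcap]
      refine Finset.eq_of_subset_of_card_le (Finset.subset_inter hb1.1 hb2.1) ?_
      rw [hcapcard]
      have := hb1.2; have := h3.2
      omega
    have hEinst := hE lam ρ
    have hLHS : ((s.repr (s (rowYD 1) * s lam)).sum fun ν c => c * s.repr (zeta (s ν)) ρ)
        = s.repr (zeta (s nu)) ρ := by
      rw [show ((s.repr (s (rowYD 1) * s lam)).sum fun ν c => c * s.repr (zeta (s ν)) ρ)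
        = ∑ ν ∈ (s.repr (s (rowYD 1) * s lam)).support,
            (s.repr (s (rowYD 1) * s lam)) ν * s.repr (zeta (s ν)) ρ from rfl]
      rw [Finset.sum_eq_single_of_mem nu]
      · rw [hP1, if_pos h1, one_mul]
      · rw [Finsupp.mem_support_iff, hP1, if_pos h1]
        norm_num
      · intro b hb hbne
        have hcov : Covers lam b := by
          by_contra hcb
          exact (Finsupp.mem_support_iff.mp hb) (by rw [hP1]; exact if_neg hcb)
        have hzero : s.repr (zeta (s b)) ρ = 0 := by
          apply hzeta
          intro hcb
          exact hbne (hupunique b hcov hcb)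
        rw [hzero, mul_zero]
    have hRHS : ((s.repr (zeta (s lam))).sum fun μ' c => c * (if Covers μ' ρ then 1 else 0))
        = s.repr (zeta (s lam)) μ := by
      rw [show ((s.repr (zeta (s lam))).sum fun μ' c => c * (if Covers μ' ρ then 1 else 0))
        = ∑ μ' ∈ (s.repr (zeta (s lam))).support,
            (s.repr (zeta (s lam))) μ' * (if Covers μ' ρ then 1 else 0) from rfl]
      rw [Finset.sum_eq_single μ]
      · rw [if_pos h4, mul_one]
      · intro b hb hbne
        have hcb : Covers b lam := by
          by_contra hcb
          exact (Finsupp.mem_support_iff.mp hb) (hzeta lam b hcb)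
        by_cases hcρ : Covers b ρ
        · exact absurd (hdownunique b hcb hcρ) hbne
        · rw [if_neg hcρ, mul_zero]
      · intro hμ
        rw [Finsupp.notMem_support_iff.mp hμ, zero_mul]
    rw [hLHS, hRHS, if_neg hne, mul_zero, zero_add] at hEinst
    exact hEinst
  -- the corner relation for shapes with exactly two addable and one removable corner
  have hrectE : ∀ ρ ν₁ ν₂ μ₀ : YoungDiagram, Covers ρ ν₁ → Covers ρ ν₂ → ν₁ ≠ ν₂ →
      (∀ ν : YoungDiagram, Covers ρ ν → ν = ν₁ ∨ ν = ν₂) → Covers μ₀ ρ →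
      (∀ μ : YoungDiagram, Covers μ ρ → μ = μ₀) →
      s.repr (zeta (s ν₁)) ρ + s.repr (zeta (s ν₂)) ρ = c1 + s.repr (zeta (s ρ)) μ₀ := by
    intro ρ ν₁ ν₂ μ₀ hc1' hc2' hne12 hclass hcd hdun
    have hEinst := hE ρ ρ
    have hsupp : (s.repr (s (rowYD 1) * s ρ)).support = {ν₁, ν₂} := by
      ext b
      rw [Finsupp.mem_support_iff, hP1, Finset.mem_insert, Finset.mem_singleton]
      constructor
      · intro hb
        have hcov : Covers ρ b := by
          by_contra hcb
          rw [if_neg hcb] at hb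
          exact hb rfl
        exact hclass b hcov
      · rintro (rfl | rfl)
        · rw [if_pos hc1']; norm_num
        · rw [if_pos hc2']; norm_num
    have hLHS : ((s.repr (s (rowYD 1) * s ρ)).sum fun ν c => c * s.repr (zeta (s ν)) ρ)
        = s.repr (zeta (s ν₁)) ρ + s.repr (zeta (s ν₂)) ρ := by
      rw [show ((s.repr (s (rowYD 1) * s ρ)).sum fun ν c => c * s.repr (zeta (s ν)) ρ)
        = ∑ ν ∈ (s.repr (s (rowYD 1) * s ρ)).support,
            (s.repr (s (rowYD 1) * s ρ)) ν * s.repr (zeta (s ν)) ρ from rfl]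
      rw [hsupp, Finset.sum_pair hne12, hP1, hP1, if_pos hc1', if_pos hc2', one_mul, one_mul]
    have hRHS : ((s.repr (zeta (s ρ))).sum fun μ' c => c * (if Covers μ' ρ then 1 else 0))
        = s.repr (zeta (s ρ)) μ₀ := by
      rw [show ((s.repr (zeta (s ρ))).sum fun μ' c => c * (if Covers μ' ρ then 1 else 0))
        = ∑ μ' ∈ (s.repr (zeta (s ρ))).support,
            (s.repr (zeta (s ρ))) μ' * (if Covers μ' ρ then 1 else 0) from rfl]
      rw [Finset.sum_eq_single μ₀]
      · rw [if_pos hcd, mul_one]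
      · intro b hb hbne
        by_cases hcρ : Covers b ρ
        · exact absurd (hdun b hcρ) hbne
        · rw [if_neg hcρ, mul_zero]
      · intro hμ
        rw [Finsupp.notMem_support_iff.mp hμ, zero_mul]
    rw [hLHS, hRHS, if_pos rfl, mul_one] at hEinst
    exact hEinst
  -- every cover's coefficient depends only on the position of the removed box
  have hM : ∀ n : ℕ, ∀ nu mu : YoungDiagram, ∀ x : ℕ × ℕ, nu.cells.card = n →
      Covers mu nu → nu.cells \ mu.cells = {x} →
      s.repr (zeta (s nu)) mu
        = s.repr (zeta (s (BoxLeib.rect x.1 x.2))) (BoxLeib.rectErase x.1 x.2) := by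
    intro n
    induction n using Nat.strong_induction_on with
    | _ n ih =>
      intro nu mu x hcard hc hs
      have hmax := BoxLeib.sdiff_maximal hc hs
      have hxnu : x ∈ nu.cells := (BoxLeib.sdiff_mem hs).1
      have hxmu : x ∉ mu.cells := (BoxLeib.sdiff_mem hs).2
      have hrectsub : (BoxLeib.rect x.1 x.2).cells ⊆ nu.cells := by
        intro c hc'
        exact BoxLeib.lower nu (Prod.le_def.mpr (BoxLeib.mem_rect.mp hc')) hxnu
      by_cases hrect : nu.cells = (BoxLeib.rect x.1 x.2).cells
      · have hnu : nu = BoxLeib.rect x.1 x.2 := YoungDiagram.ext hrect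
        have hmu : mu = BoxLeib.rectErase x.1 x.2 := by
          apply YoungDiagram.ext
          rw [BoxLeib.covers_cells_eq hc hs, BoxLeib.cells_rectErase, hrect]
        rw [hnu, hmu]
      · have hne' : (nu.cells \ (BoxLeib.rect x.1 x.2).cells).Nonempty := by
          rw [Finset.sdiff_nonempty]
          intro hsub
          exact hrect (Finset.Subset.antisymm hsub hrectsub)
        obtain ⟨y, hy, hymax⟩ :=
          Finset.exists_max_image (nu.cells \ (BoxLeib.rect x.1 x.2).cells)
            (fun c => c.1 + c.2) hne'
        obtain ⟨hyn, hyr⟩ := Finset.mem_sdiff.mp hy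
        have hyx : y ≠ x := by
          rintro rfl
          exact hyr (BoxLeib.mem_rect.mpr ⟨le_refl _, le_refl _⟩)
        have hy1 : (y.1+1, y.2) ∉ nu.cells := by
          intro hmem
          have hnr : (y.1+1, y.2) ∉ (BoxLeib.rect x.1 x.2).cells := by
            simp only [BoxLeib.mem_rect] at hyr ⊢
            omega
          have := hymax _ (Finset.mem_sdiff.mpr ⟨hmem, hnr⟩)
          simp only at this
          omega
        have hy2 : (y.1, y.2+1) ∉ nu.cells := by
          intro hmem
          have hnr : (y.1, y.2+1) ∉ (BoxLeib.rect x.1 x.2).cells := by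
            simp only [BoxLeib.mem_rect] at hyr ⊢
            omega
          have := hymax _ (Finset.mem_sdiff.mpr ⟨hmem, hnr⟩)
          simp only at this
          omega
        set lam := BoxLeib.eraseYD nu y hy1 hy2 with hlamdef
        have hlamcells : lam.cells = nu.cells.erase y := rfl
        have hxlam : x ∈ lam.cells := by
          rw [hlamcells, Finset.mem_erase]
          exact ⟨fun h => hyx h.symm, hxnu⟩
        have hx1 : (x.1+1, x.2) ∉ lam.cells := fun h => hmax.1 (Finset.mem_of_mem_erase h)
        have hx2 : (x.1, x.2+1) ∉ lam.cells := fun h => hmax.2 (Finset.mem_of_mem_erase h)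
        set mu' := BoxLeib.eraseYD lam x hx1 hx2 with hmu'def
        have hmu'cells : mu'.cells = lam.cells.erase x := rfl
        have hnucard : 0 < nu.cells.card := Finset.card_pos.mpr ⟨x, hxnu⟩
        have hlamcard : lam.cells.card = nu.cells.card - 1 := by
          rw [hlamcells, Finset.card_erase_of_mem hyn]
        have hmu'card : mu'.cells.card = lam.cells.card - 1 := by
          rw [hmu'cells, Finset.card_erase_of_mem hxlam]
        have hlamcard2 : 0 < lam.cells.card := Finset.card_pos.mpr ⟨x, hxlam⟩
        have hcovlam : Covers lam nu := by
          refine ⟨?_, ?_⟩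
          · rw [hlamcells]; exact Finset.erase_subset _ _
          · omega
        have hlamne : lam ≠ mu := by
          intro h
          rw [h] at hxlam
          exact hxmu hxlam
        have hcovmu'lam : Covers mu' lam := by
          refine ⟨?_, ?_⟩
          · rw [hmu'cells]; exact Finset.erase_subset _ _
          · omega
        have hymu : y ∈ mu.cells := BoxLeib.mem_of_not_sdiff hs hyn hyx
        have hcovmu'mu : Covers mu' mu := by
          refine ⟨?_, ?_⟩
          · intro z hz
            rw [hmu'cells, Finset.mem_erase, hlamcells, Finset.mem_erase] at hz
            exact BoxLeib.mem_of_not_sdiff hs hz.2.2 hz.1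
          · have := hc.2
            omega
        have hstep := hmove nu lam mu mu' hcovlam hc hlamne hcovmu'lam hcovmu'mu
        have hsd' : lam.cells \ mu'.cells = {x} := by
          ext z
          rw [Finset.mem_sdiff, hmu'cells, Finset.mem_erase, Finset.mem_singleton]
          constructor
          · rintro ⟨hz1, hz2⟩
            by_contra hzx
            exact hz2 ⟨hzx, hz1⟩
          · rintro rfl
            exact ⟨hxlam, fun h => h.1 rfl⟩
        rw [hstep]
        exact ih lam.cells.card (by omega) lam mu' x rfl hcovmu'lam hsd'
  have hM' : ∀ nu mu : YoungDiagram, ∀ x : ℕ × ℕ, Covers mu nu →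
      nu.cells \ mu.cells = {x} →
      s.repr (zeta (s nu)) mu
        = s.repr (zeta (s (BoxLeib.rect x.1 x.2))) (BoxLeib.rectErase x.1 x.2) :=
    fun nu mu x h1 h2 => hM nu.cells.card nu mu x rfl h1 h2
  -- the rectangle recursion
  set Rf : ℕ → ℕ → ℚ :=
    fun i j => s.repr (zeta (s (BoxLeib.rect i j))) (BoxLeib.rectErase i j) with hRfdef
  have hc1Rf : Rf 0 0 = c1 := by
    show s.repr (zeta (s (BoxLeib.rect 0 0))) (BoxLeib.rectErase 0 0) = c1
    rw [hbot, hc1def, hrow1]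
  have hRrel : ∀ i j : ℕ, Rf 0 (j+1) + Rf (i+1) 0 = c1 + Rf i j := by
    intro i j
    have h1 := hrectE (BoxLeib.rect i j) (BoxLeib.rectR i j) (BoxLeib.rectB i j)
      (BoxLeib.rectErase i j) (BoxLeib.covers_rect_rectR i j) (BoxLeib.covers_rect_rectB i j)
      (BoxLeib.rectR_ne_rectB i j) (fun ν h => BoxLeib.rect_covered_unique h)
      (BoxLeib.covers_rectErase i j) (fun μ h => BoxLeib.rect_covers_unique h)
    have e1 : s.repr (zeta (s (BoxLeib.rectR i j))) (BoxLeib.rect i j) = Rf 0 (j+1) :=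
      hM' (BoxLeib.rectR i j) (BoxLeib.rect i j) (0, j+1) (BoxLeib.covers_rect_rectR i j)
        (BoxLeib.sdiff_rectR i j)
    have e2 : s.repr (zeta (s (BoxLeib.rectB i j))) (BoxLeib.rect i j) = Rf (i+1) 0 :=
      hM' (BoxLeib.rectB i j) (BoxLeib.rect i j) (i+1, 0) (BoxLeib.covers_rect_rectB i j)
        (BoxLeib.sdiff_rectB i j)
    rw [e1, e2] at h1
    exact h1
  set β : ℚ := Rf 0 1 - c1 with hβ
  have hv : ∀ i : ℕ, Rf i 0 = c1 - i * β := by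
    intro i
    induction i with
    | zero => rw [hc1Rf]; push_cast; ring
    | succ i ihv =>
      have := hRrel i 0
      rw [ihv] at this
      push_cast
      push_cast at this
      linarith [this, hβ]
  have hu : ∀ j : ℕ, Rf 0 j = c1 + j * β := by
    intro j
    induction j with
    | zero => rw [hc1Rf]; push_cast; ring
    | succ j ihu =>
      have h1 := hRrel 0 j
      have h2 := hv 1
      rw [ihu, h2] at h1
      push_cast
      push_cast at h1
      linarith [h1]
  have hRfval : ∀ i j : ℕ, Rf i j = c1 + ((j : ℚ) - i) * β := by
    intro i j
    have h1 := hRrel i j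
    have h2 := hu (j+1)
    have h3 := hv (i+1)
    rw [h2, h3] at h1
    push_cast at h1 ⊢
    linarith [h1]
  -- final assembly
  refine ⟨c1, β, ?_⟩
  apply Module.Basis.ext s
  intro lam
  apply Module.Basis.ext_elem s
  intro mu
  rw [LinearMap.add_apply, LinearMap.smul_apply, LinearMap.smul_apply, map_add, map_smul,
    map_smul, Finsupp.add_apply, Finsupp.smul_apply, Finsupp.smul_apply, smul_eq_mul,
    smul_eq_mul, hxi, hnabla]
  by_cases hcov : Covers mu lam
  · rw [if_pos hcov, if_pos hcov, mul_one]
    obtain ⟨x, hs⟩ := BoxLeib.covers_sdiff hcov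
    have h1 := hM' lam mu x hcov hs
    have h2 : remContent mu lam = (x.2 : ℤ) - x.1 := by
      rw [remContent, hs, Finset.sum_singleton]
    rw [h1]
    rw [show s.repr (zeta (s (BoxLeib.rect x.1 x.2))) (BoxLeib.rectErase x.1 x.2)
      = Rf x.1 x.2 from rfl]
    rw [hRfval, h2]
    push_cast
    ring
  · rw [if_neg hcov, if_neg hcov, mul_zero, mul_zero, add_zero]
    exact hzeta lam mu hcov
end

section
/- The commutator ρ^(2) := [ξ, ∇] = ξ∇ − ∇ξ acts on Schur functions by deleting dominoes: ρ^(2)(s_λ) = Σ s_μ − Σ s_ν, where μ ranges over partitions obtained from λ by removing a horizontal domino (two boxes in the same row) and ν over those obtained by removing a vertical domino (two boxes in the same column). -/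
/-- `lam ∖ mu` is a single horizontal domino (two boxes in the same row). -/
def HDomino (mu lam : YoungDiagram) : Prop :=
  mu.cells ⊆ lam.cells ∧ ∃ i j : ℕ, lam.cells \ mu.cells = {(i, j), (i, j + 1)}

/-- `lam ∖ mu` is a single vertical domino (two boxes in the same column). -/
def VDomino (mu lam : YoungDiagram) : Prop :=
  mu.cells ⊆ lam.cells ∧ ∃ i j : ℕ, lam.cells \ mu.cells = {(i, j), (i + 1, j)}

section Aux

lemma pairCard {a b : ℕ × ℕ} (h : a ≠ b) : ({a, b} : Finset (ℕ × ℕ)).card = 2 := by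
  rw [Finset.card_insert_of_notMem (by simp [h]), Finset.card_singleton]

lemma pair_eq_cases {a b c d : ℕ × ℕ} (h : ({a, b} : Finset (ℕ × ℕ)) = {c, d}) :
    (a = c ∨ a = d) ∧ (b = c ∨ b = d) := by
  constructor
  · have ha : a ∈ ({c, d} : Finset (ℕ × ℕ)) := by rw [← h]; simp
    simpa using ha
  · have hb : b ∈ ({c, d} : Finset (ℕ × ℕ)) := by rw [← h]; simp
    simpa using hb

lemma comparable_adj (lam mu : YoungDiagram)
    {a b : ℕ × ℕ} (hD : lam.cells \ mu.cells = {a, b}) (hne : a ≠ b) (hba : b ≤ a) :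
    a = (b.1, b.2 + 1) ∨ a = (b.1 + 1, b.2) := by
  have haD : a ∈ lam.cells \ mu.cells := by rw [hD]; simp
  have hbD : b ∈ lam.cells \ mu.cells := by rw [hD]; simp
  have keyc : ∀ c : ℕ × ℕ, b ≤ c → c ≤ a → c = a ∨ c = b := by
    intro c hcb hca
    have hcl : c ∈ lam.cells := lam.isLowerSet hca (Finset.mem_sdiff.mp haD).1
    have hcm : c ∉ mu.cells := fun h => (Finset.mem_sdiff.mp hbD).2 (mu.isLowerSet hcb h)
    have hc : c ∈ ({a, b} : Finset (ℕ × ℕ)) := by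
      rw [← hD]; exact Finset.mem_sdiff.mpr ⟨hcl, hcm⟩
    simpa using hc
  obtain ⟨hle1, hle2⟩ := Prod.le_def.mp hba
  obtain ⟨a1, a2⟩ := a; obtain ⟨b1, b2⟩ := b
  simp only [ne_eq, Prod.mk.injEq, not_and] at hne
  simp only at hle1 hle2
  by_cases hb2 : b2 = a2
  · have hb1 : b1 < a1 :=
      lt_of_le_of_ne hle1 (fun h => hne h.symm hb2.symm)
    have h3 := keyc (a1 - 1, a2) (Prod.mk_le_mk.mpr ⟨by omega, by omega⟩)
      (Prod.mk_le_mk.mpr ⟨by omega, le_rfl⟩)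
    simp only [Prod.mk.injEq] at h3
    right; simp only [Prod.mk.injEq]; omega
  · have hb2' : b2 < a2 := lt_of_le_of_ne hle2 hb2
    have h1 := keyc (b1, a2) (Prod.mk_le_mk.mpr ⟨le_rfl, hle2⟩)
      (Prod.mk_le_mk.mpr ⟨hle1, le_rfl⟩)
    simp only [Prod.mk.injEq] at h1
    have hb1 : b1 = a1 := by omega
    have h3 := keyc (a1, a2 - 1) (Prod.mk_le_mk.mpr ⟨by omega, by omega⟩)
      (Prod.mk_le_mk.mpr ⟨le_rfl, by omega⟩)
    simp only [Prod.mk.injEq] at h3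
    left; simp only [Prod.mk.injEq]; omega

lemma remContent_of_sdiff (mu nu : YoungDiagram) {x : ℕ × ℕ}
    (h : nu.cells \ mu.cells = {x}) :
    remContent mu nu = (x.2 : ℤ) - (x.1 : ℤ) := by
  rw [remContent, h, Finset.sum_singleton]

lemma exists_mid (lam mu : YoungDiagram) (hsub : mu.cells ⊆ lam.cells)
    (hcard : lam.cells.card = mu.cells.card + 2)
    {a b : ℕ × ℕ} (hD : lam.cells \ mu.cells = {a, b}) (hne : a ≠ b) (hba : ¬ b ≤ a) :
    ∃ ν : YoungDiagram, ν.cells = insert a mu.cells ∧ Covers mu ν ∧ Covers ν lam ∧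
      remContent mu ν = (a.2 : ℤ) - (a.1 : ℤ) ∧
      remContent ν lam = (b.2 : ℤ) - (b.1 : ℤ) := by
  have haD : a ∈ lam.cells \ mu.cells := by rw [hD]; simp
  have hbD : b ∈ lam.cells \ mu.cells := by rw [hD]; simp
  obtain ⟨haL, haM⟩ := Finset.mem_sdiff.mp haD
  obtain ⟨hbL, hbM⟩ := Finset.mem_sdiff.mp hbD
  have hlow : IsLowerSet (↑(insert a mu.cells) : Set (ℕ × ℕ)) := by
    intro x y hyx hx
    simp only [Finset.coe_insert, Set.mem_insert_iff, Finset.mem_coe] at hx ⊢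
    rcases hx with rfl | hx
    · have hyL : y ∈ lam.cells := lam.isLowerSet hyx haL
      by_cases hyM : y ∈ mu.cells
      · right; exact hyM
      · left
        have hy : y ∈ ({x, b} : Finset (ℕ × ℕ)) := by
          rw [← hD]; exact Finset.mem_sdiff.mpr ⟨hyL, hyM⟩
        simp only [Finset.mem_insert, Finset.mem_singleton] at hy
        rcases hy with rfl | rfl
        · rfl
        · exact absurd hyx hba
    · right; exact mu.isLowerSet hyx hx
  refine ⟨⟨insert a mu.cells, hlow⟩, rfl, ?_, ?_, ?_, ?_⟩
  · exact ⟨Finset.subset_insert _ _, by rw [Finset.card_insert_of_notMem haM]⟩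
  · exact ⟨Finset.insert_subset haL hsub,
      by rw [Finset.card_insert_of_notMem haM]; omega⟩
  · refine remContent_of_sdiff _ _ ?_
    ext c
    simp only [Finset.mem_sdiff, Finset.mem_insert, Finset.mem_singleton]
    constructor
    · rintro ⟨rfl | hc, hcm⟩
      · rfl
      · exact absurd hc hcm
    · rintro rfl; exact ⟨Or.inl rfl, haM⟩
  · refine remContent_of_sdiff _ _ ?_
    ext c
    simp only [Finset.mem_sdiff, Finset.mem_insert, not_or, Finset.mem_singleton]
    constructor
    · rintro ⟨hcL, hca, hcm⟩
      have hc : c ∈ ({a, b} : Finset (ℕ × ℕ)) := by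
        rw [← hD]; exact Finset.mem_sdiff.mpr ⟨hcL, hcm⟩
      simp only [Finset.mem_insert, Finset.mem_singleton] at hc
      tauto
    · rintro rfl; exact ⟨hbL, fun h => hne h.symm, hbM⟩

lemma mid_cells {lam mu nu : YoungDiagram} (h1 : Covers mu nu) (h2 : Covers nu lam)
    {a b : ℕ × ℕ} (hD : lam.cells \ mu.cells = {a, b}) :
    nu.cells = insert a mu.cells ∨ nu.cells = insert b mu.cells := by
  have hsub : nu.cells \ mu.cells ⊆ {a, b} := by
    rw [← hD]; exact Finset.sdiff_subset_sdiff h2.1 Finset.Subset.rfl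
  have hcard1 : (nu.cells \ mu.cells).card = 1 := by
    rw [Finset.card_sdiff_of_subset h1.1, h1.2]; omega
  obtain ⟨x, hx⟩ := Finset.card_eq_one.mp hcard1
  have hxab : x ∈ ({a, b} : Finset (ℕ × ℕ)) := hsub (by rw [hx]; simp)
  have hnu : nu.cells = insert x mu.cells := by
    have h := Finset.union_sdiff_of_subset h1.1
    rw [hx] at h
    rw [← h, Finset.union_comm, ← Finset.insert_eq]
  simp only [Finset.mem_insert, Finset.mem_singleton] at hxab
  rcases hxab with rfl | rfl
  · exact Or.inl hnu
  · exact Or.inr hnu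

open scoped Classical in
lemma key_sum_comp (lam mu : YoungDiagram) (U : Finset YoungDiagram)
    (hU : ∀ ν : YoungDiagram, Covers ν lam → ν ∈ U)
    (hsub1 : mu.cells ⊆ lam.cells) (hcard : lam.cells.card = mu.cells.card + 2)
    {a b : ℕ × ℕ} (hne : a ≠ b) (hD2 : lam.cells \ mu.cells = {a, b}) (hba : b ≤ a) :
    (∑ ν ∈ U, (if Covers mu ν ∧ Covers ν lam
        then ((remContent ν lam : ℚ) - (remContent mu ν : ℚ)) else 0))
      = (if HDomino mu lam then 1 else 0) - (if VDomino mu lam then 1 else 0) := by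
  have hbD : b ∈ lam.cells \ mu.cells := by rw [hD2]; simp
  obtain ⟨hbL, hbM⟩ := Finset.mem_sdiff.mp hbD
  have hab : ¬ a ≤ b := fun h => hne (le_antisymm h hba)
  have hD2' : lam.cells \ mu.cells = {b, a} := by rw [hD2, Finset.pair_comm]
  obtain ⟨ν₁, hc1, hcov1, hcov2, hr1, hr2⟩ :=
    exists_mid lam mu hsub1 hcard hD2' hne.symm hab
  have hsum : (∑ ν ∈ U, (if Covers mu ν ∧ Covers ν lam
        then ((remContent ν lam : ℚ) - (remContent mu ν : ℚ)) else 0))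
      = (if Covers mu ν₁ ∧ Covers ν₁ lam
        then ((remContent ν₁ lam : ℚ) - (remContent mu ν₁ : ℚ)) else 0) := by
    refine Finset.sum_eq_single_of_mem ν₁ (hU ν₁ hcov2) ?_
    intro ν _ hνne
    by_cases hch : Covers mu ν ∧ Covers ν lam
    · exfalso
      rcases mid_cells hch.1 hch.2 hD2 with hcl | hcl
      · -- nu.cells = insert a mu.cells : impossible since b ≤ a
        have haN : a ∈ ν.cells := by rw [hcl]; simp
        have hbN : b ∈ ν.cells := ν.isLowerSet hba haN
        rw [hcl] at hbN
        simp only [Finset.mem_insert] at hbN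
        rcases hbN with rfl | h
        · exact hne rfl
        · exact hbM h
      · exact hνne ((YoungDiagram.ext_iff).mpr (hcl.trans hc1.symm))
    · rw [if_neg hch]
  rw [hsum, if_pos ⟨hcov1, hcov2⟩, hr1, hr2]
  rcases comparable_adj lam mu hD2 hne hba with ha | ha
  · have hH : HDomino mu lam := ⟨hsub1, b.1, b.2, by rw [hD2, ha, Finset.pair_comm]⟩
    have hV : ¬ VDomino mu lam := by
      rintro ⟨-, i, j, hd⟩
      obtain ⟨h1', h2'⟩ := pair_eq_cases (hD2.symm.trans hd)
      have ha1 : a.1 = b.1 := by rw [ha]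
      have ha2 : a.2 = b.2 + 1 := by rw [ha]
      rcases h1' with h | h <;> rcases h2' with h' | h' <;>
        (have e1 := congrArg Prod.fst h
         have e2 := congrArg Prod.snd h
         have f1 := congrArg Prod.fst h'
         have f2 := congrArg Prod.snd h'
         simp only at e1 e2 f1 f2
         omega)
    rw [if_pos hH, if_neg hV]
    subst ha
    push_cast
    ring
  · have hV : VDomino mu lam := ⟨hsub1, b.1, b.2, by rw [hD2, ha, Finset.pair_comm]⟩
    have hH : ¬ HDomino mu lam := by
      rintro ⟨-, i, j, hd⟩
      obtain ⟨h1', h2'⟩ := pair_eq_cases (hD2.symm.trans hd)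
      have ha1 : a.1 = b.1 + 1 := by rw [ha]
      have ha2 : a.2 = b.2 := by rw [ha]
      rcases h1' with h | h <;> rcases h2' with h' | h' <;>
        (have e1 := congrArg Prod.fst h
         have e2 := congrArg Prod.snd h
         have f1 := congrArg Prod.fst h'
         have f2 := congrArg Prod.snd h'
         simp only at e1 e2 f1 f2
         omega)
    rw [if_pos hV, if_neg hH]
    subst ha
    push_cast
    ring

open scoped Classical in
lemma key_sum (lam mu : YoungDiagram) (U : Finset YoungDiagram)
    (hU : ∀ ν : YoungDiagram, Covers ν lam → ν ∈ U) :
    (∑ ν ∈ U, (if Covers mu ν ∧ Covers ν lam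
        then ((remContent ν lam : ℚ) - (remContent mu ν : ℚ)) else 0))
      = (if HDomino mu lam then 1 else 0) - (if VDomino mu lam then 1 else 0) := by
  by_cases hsub : mu.cells ⊆ lam.cells ∧ lam.cells.card = mu.cells.card + 2
  · obtain ⟨hsub1, hcard⟩ := hsub
    have hD : (lam.cells \ mu.cells).card = 2 := by
      rw [Finset.card_sdiff_of_subset hsub1]; omega
    obtain ⟨a, b, hne, hD2⟩ := Finset.card_eq_two.mp hD
    have haD : a ∈ lam.cells \ mu.cells := by rw [hD2]; simp
    have hbD : b ∈ lam.cells \ mu.cells := by rw [hD2]; simp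
    obtain ⟨haL, haM⟩ := Finset.mem_sdiff.mp haD
    obtain ⟨hbL, hbM⟩ := Finset.mem_sdiff.mp hbD
    by_cases hcomp : b ≤ a ∨ a ≤ b
    · rcases hcomp with h | h
      · exact key_sum_comp lam mu U hU hsub1 hcard hne hD2 h
      · exact key_sum_comp lam mu U hU hsub1 hcard hne.symm
          (by rw [hD2, Finset.pair_comm]) h
    · push_neg at hcomp
      obtain ⟨hba, hab⟩ := hcomp
      obtain ⟨ν₁, hc1, hm1, hl1, hr1a, hr1b⟩ :=
        exists_mid lam mu hsub1 hcard hD2 hne hba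
      obtain ⟨ν₂, hc2, hm2, hl2, hr2a, hr2b⟩ :=
        exists_mid lam mu hsub1 hcard (by rw [hD2, Finset.pair_comm]) hne.symm hab
      have hνne : ν₁ ≠ ν₂ := by
        intro h
        have ha2 : a ∈ ν₂.cells := by rw [← h, hc1]; simp
        rw [hc2] at ha2
        simp only [Finset.mem_insert] at ha2
        rcases ha2 with rfl | h'
        · exact hne rfl
        · exact haM h'
      have hsum : (∑ ν ∈ U, (if Covers mu ν ∧ Covers ν lam
            then ((remContent ν lam : ℚ) - (remContent mu ν : ℚ)) else 0))
          = ∑ ν ∈ ({ν₁, ν₂} : Finset YoungDiagram),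
            (if Covers mu ν ∧ Covers ν lam
            then ((remContent ν lam : ℚ) - (remContent mu ν : ℚ)) else 0) := by
        refine (Finset.sum_subset ?_ ?_).symm
        · exact Finset.insert_subset (hU ν₁ hl1)
            (Finset.singleton_subset_iff.mpr (hU ν₂ hl2))
        · intro ν _ hνpair
          by_cases hch : Covers mu ν ∧ Covers ν lam
          · exfalso
            apply hνpair
            simp only [Finset.mem_insert, Finset.mem_singleton]
            rcases mid_cells hch.1 hch.2 hD2 with hcl | hcl
            · exact Or.inl ((YoungDiagram.ext_iff).mpr (hcl.trans hc1.symm))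
            · exact Or.inr ((YoungDiagram.ext_iff).mpr (hcl.trans hc2.symm))
          · rw [if_neg hch]
      have hH : ¬ HDomino mu lam := by
        rintro ⟨-, i, j, hd⟩
        obtain ⟨h1', h2'⟩ := pair_eq_cases (hD2.symm.trans hd)
        rcases h1' with rfl | rfl <;> rcases h2' with rfl | rfl
        · exact hne rfl
        · exact hab (Prod.mk_le_mk.mpr ⟨le_rfl, by omega⟩)
        · exact hba (Prod.mk_le_mk.mpr ⟨le_rfl, by omega⟩)
        · exact hne rfl
      have hV : ¬ VDomino mu lam := by
        rintro ⟨-, i, j, hd⟩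
        obtain ⟨h1', h2'⟩ := pair_eq_cases (hD2.symm.trans hd)
        rcases h1' with rfl | rfl <;> rcases h2' with rfl | rfl
        · exact hne rfl
        · exact hab (Prod.mk_le_mk.mpr ⟨by omega, le_rfl⟩)
        · exact hba (Prod.mk_le_mk.mpr ⟨by omega, le_rfl⟩)
        · exact hne rfl
      rw [hsum, Finset.sum_pair hνne, if_pos ⟨hm1, hl1⟩, if_pos ⟨hm2, hl2⟩,
        hr1a, hr1b, hr2a, hr2b, if_neg hH, if_neg hV]
      push_cast
      ring
  · have h0 : ∀ ν ∈ U, (if Covers mu ν ∧ Covers ν lam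
        then ((remContent ν lam : ℚ) - (remContent mu ν : ℚ)) else 0) = 0 := by
      intro ν _
      rw [if_neg]
      rintro ⟨⟨hs1, hc1⟩, ⟨hs2, hc2⟩⟩
      exact hsub ⟨hs1.trans hs2, by omega⟩
    rw [Finset.sum_eq_zero h0]
    have hH : ¬ HDomino mu lam := by
      rintro ⟨h1, i, j, hd⟩
      refine hsub ⟨h1, ?_⟩
      have h2 := Finset.card_sdiff_of_subset h1
      rw [hd, pairCard (by simp)] at h2
      have h3 := Finset.card_le_card h1
      omega
    have hV : ¬ VDomino mu lam := by
      rintro ⟨h1, i, j, hd⟩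
      refine hsub ⟨h1, ?_⟩
      have h2 := Finset.card_sdiff_of_subset h1
      rw [hd, pairCard (by simp)] at h2
      have h3 := Finset.card_le_card h1
      omega
    rw [if_neg hH, if_neg hV, sub_zero]

end Aux

open scoped Classical in
/-- The commutator `ρ⁽²⁾ = ξ∇ - ∇ξ` removes dominoes: a horizontal domino with
coefficient `1` and a vertical domino with coefficient `-1`. -/
theorem commutator_removes_dominoes
    {L : Type*} [CommRing L] [Algebra ℚ L]
    (s : Module.Basis YoungDiagram ℚ L)
    (hone : s (⊥ : YoungDiagram) = 1)
    (hPieri : ∀ (k : ℕ) (lam mu : YoungDiagram),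
      s.repr (s (rowYD k) * s lam) mu =
        if mu.cells.card = lam.cells.card + k ∧ IsHStrip lam mu then 1 else 0)
    (xi : Module.End ℚ L)
    (hxi : ∀ lam mu : YoungDiagram,
      s.repr (xi (s lam)) mu = if Covers mu lam then 1 else 0)
    (nabla : Module.End ℚ L)
    (hnabla : ∀ lam mu : YoungDiagram,
      s.repr (nabla (s lam)) mu =
        if Covers mu lam then (remContent mu lam : ℚ) else 0)
    : ∀ lam mu : YoungDiagram,
      s.repr ((xi * nabla - nabla * xi) (s lam)) mu =
        (if HDomino mu lam then 1 else 0) - (if VDomino mu lam then 1 else 0) := by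
  intro lam mu
  have hrepr : ∀ (T : Module.End ℚ L) (y : L),
      s.repr (T y) mu = ∑ ν ∈ (s.repr y).support, s.repr y ν * s.repr (T (s ν)) mu := by
    intro T y
    conv_lhs => rw [← s.linearCombination_repr y]
    rw [Finsupp.linearCombination_apply, Finsupp.sum, map_sum, map_sum, Finset.sum_apply']
    refine Finset.sum_congr rfl fun ν _ => ?_
    rw [map_smul, map_smul, Finsupp.smul_apply, smul_eq_mul]
  have e1 : s.repr ((xi * nabla - nabla * xi) (s lam)) mu
      = (∑ ν ∈ (s.repr (nabla (s lam))).support,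
          s.repr (nabla (s lam)) ν * s.repr (xi (s ν)) mu)
        - ∑ ν ∈ (s.repr (xi (s lam))).support,
          s.repr (xi (s lam)) ν * s.repr (nabla (s ν)) mu := by
    rw [LinearMap.sub_apply, map_sub, Finsupp.sub_apply, Module.End.mul_apply,
      Module.End.mul_apply, hrepr xi (nabla (s lam)), hrepr nabla (xi (s lam))]
  set U : Finset YoungDiagram :=
    (s.repr (nabla (s lam))).support ∪ (s.repr (xi (s lam))).support with hU
  have h1 : (∑ ν ∈ (s.repr (nabla (s lam))).support,
        s.repr (nabla (s lam)) ν * s.repr (xi (s ν)) mu)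
      = ∑ ν ∈ U, s.repr (nabla (s lam)) ν * s.repr (xi (s ν)) mu := by
    refine Finset.sum_subset Finset.subset_union_left fun ν _ hν => ?_
    rw [Finsupp.notMem_support_iff.mp hν, zero_mul]
  have h2 : (∑ ν ∈ (s.repr (xi (s lam))).support,
        s.repr (xi (s lam)) ν * s.repr (nabla (s ν)) mu)
      = ∑ ν ∈ U, s.repr (xi (s lam)) ν * s.repr (nabla (s ν)) mu := by
    refine Finset.sum_subset Finset.subset_union_right fun ν _ hν => ?_
    rw [Finsupp.notMem_support_iff.mp hν, zero_mul]
  rw [e1, h1, h2, ← Finset.sum_sub_distrib]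
  have hkey := key_sum lam mu U (fun ν hν => Finset.mem_union_right _
    (Finsupp.mem_support_iff.mpr (by rw [hxi lam ν, if_pos hν]; exact one_ne_zero)))
  rw [← hkey]
  refine Finset.sum_congr rfl fun ν _ => ?_
  rw [hnabla lam ν, hxi ν mu, hxi lam ν, hnabla ν mu]
  by_cases hc1 : Covers mu ν <;> by_cases hc2 : Covers ν lam <;>
    simp [hc1, hc2]
end

section
/- The operators ρ^(k), k ≥ 1 (defined by ρ^(1) = ξ, ρ^(k+1) = [ρ^(k), ∇]/k) commute pairwise: ρ^(j)ρ^(k) = ρ^(k)ρ^(j) for all j, k ≥ 1. -/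
/-- The bosonic operators: `rhoOp xi nabla n` is `ρ⁽ⁿ⁺¹⁾`, defined by `ρ⁽¹⁾ = ξ` and
`ρ⁽ᵏ⁺¹⁾ = (ρ⁽ᵏ⁾∇ - ∇ρ⁽ᵏ⁾)/k`. -/
noncomputable def rhoOp {L : Type*} [CommRing L] [Algebra ℚ L]
    (xi nabla : Module.End ℚ L) : ℕ → Module.End ℚ L
  | 0 => xi
  | n + 1 => ((n : ℚ) + 1)⁻¹ • (rhoOp xi nabla n * nabla - nabla * rhoOp xi nabla n)

/-! ### Auxiliary combinatorial definitions -/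

open Finset

namespace RhoAux

open scoped Classical

/-- Make a Young diagram from a finset of cells (junk value `⊥` if not a lower set). -/
noncomputable def mkYD (t : Finset (ℕ × ℕ)) : YoungDiagram :=
  if h : IsLowerSet (t : Set (ℕ × ℕ)) then ⟨t, h⟩ else ⊥

lemma mkYD_cells {t : Finset (ℕ × ℕ)} (h : IsLowerSet (t : Set (ℕ × ℕ))) :
    (mkYD t).cells = t := by simp [mkYD, h]

lemma cells_bound (μ : YoungDiagram) {c : ℕ × ℕ} (hc : c ∈ μ.cells) :
    c.1 < μ.cells.card ∧ c.2 < μ.cells.card := by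
  rw [YoungDiagram.mem_cells] at hc
  obtain ⟨i, j⟩ := c
  rw [YoungDiagram.mem_iff_lt_colLen] at hc
  have h2 : (i, j) ∈ μ := YoungDiagram.mem_iff_lt_colLen.2 hc
  rw [YoungDiagram.mem_iff_lt_rowLen] at h2
  constructor
  · calc i < μ.colLen j := hc
      _ = (μ.col j).card := μ.colLen_eq_card
      _ ≤ μ.cells.card := card_le_card (filter_subset _ _)
  · calc j < μ.rowLen i := h2
      _ = (μ.row i).card := μ.rowLen_eq_card
      _ ≤ μ.cells.card := card_le_card (filter_subset _ _)

/-- All Young diagrams whose cells lie in `range N ×ˢ range N`. -/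
noncomputable def YDle (N : ℕ) : Finset YoungDiagram :=
  ((Finset.range N ×ˢ Finset.range N).powerset.filter
      (fun t : Finset (ℕ × ℕ) => IsLowerSet (t : Set (ℕ × ℕ)))).image mkYD

lemma mem_YDle {N : ℕ} {μ : YoungDiagram} :
    μ ∈ YDle N ↔ μ.cells ⊆ Finset.range N ×ˢ Finset.range N := by
  constructor
  · rintro h
    simp only [YDle, mem_image] at h
    obtain ⟨t, ht, rfl⟩ := h
    rw [mem_filter, mem_powerset] at ht
    rw [mkYD_cells ht.2]
    exact ht.1
  · intro h
    simp only [YDle, mem_image]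
    refine ⟨μ.cells, ?_, ?_⟩
    · rw [mem_filter, mem_powerset]; exact ⟨h, μ.isLowerSet⟩
    · apply YoungDiagram.ext
      rw [mkYD_cells μ.isLowerSet]

lemma mem_YDle_of_card {N : ℕ} {μ : YoungDiagram} (h : μ.cells.card ≤ N) : μ ∈ YDle N := by
  rw [mem_YDle]
  intro c hc
  obtain ⟨h1, h2⟩ := cells_bound μ hc
  simp only [mem_product, mem_range]
  omega

/-- The diagrams covering `ν` (one box added). -/
noncomputable def coversAbove (ν : YoungDiagram) : Finset YoungDiagram :=
  (YDle (ν.cells.card + 1)).filter (fun μ => Covers ν μ)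

lemma mem_coversAbove {ν μ : YoungDiagram} : μ ∈ coversAbove ν ↔ Covers ν μ := by
  rw [coversAbove, mem_filter, and_iff_right_iff_imp]
  intro h
  exact mem_YDle_of_card (le_of_eq h.2)

/-- The Pieri set : diagrams obtained from `lam` by adding a horizontal `k`-strip. -/
noncomputable def pieriSet (k : ℕ) (lam : YoungDiagram) : Finset YoungDiagram :=
  (YDle (lam.cells.card + k)).filter
    (fun μ => μ.cells.card = lam.cells.card + k ∧ IsHStrip lam μ)

lemma mem_pieriSet {k : ℕ} {lam μ : YoungDiagram} :
    μ ∈ pieriSet k lam ↔ μ.cells.card = lam.cells.card + k ∧ IsHStrip lam μ := by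
  rw [pieriSet, mem_filter, and_iff_right_iff_imp]
  intro h
  exact mem_YDle_of_card (le_of_eq h.1)

lemma covers_iff {lam τ : YoungDiagram} :
    Covers lam τ ↔ τ.cells.card = lam.cells.card + 1 ∧ IsHStrip lam τ := by
  constructor
  · rintro ⟨hsub, hcard⟩
    refine ⟨hcard, hsub, ?_⟩
    intro c hc hcl hbelow
    -- the difference is a single cell; the cell below c would also be in the difference
    have hdiffcard : (τ.cells \ lam.cells).card = 1 := by
      rw [card_sdiff_of_subset hsub]; omega
    obtain ⟨b, hb⟩ := card_eq_one.1 hdiffcard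
    have hcd : c ∈ τ.cells \ lam.cells := mem_sdiff.2 ⟨hc, hcl⟩
    have hcb : c = b := by rwa [hb, mem_singleton] at hcd
    have hbl : (c.1 + 1, c.2) ∉ lam.cells := by
      intro hmem
      exact hcl (lam.up_left_mem (Nat.le_succ _) le_rfl (by simpa using hmem))
    have : (c.1 + 1, c.2) ∈ τ.cells \ lam.cells := mem_sdiff.2 ⟨hbelow, hbl⟩
    rw [hb, mem_singleton] at this
    rw [← hcb] at this
    exact absurd (congrArg Prod.fst this) (by simp)
  · rintro ⟨hcard, hsub, _⟩
    exact ⟨hsub, hcard⟩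

lemma pieriSet_one (lam : YoungDiagram) : pieriSet 1 lam = coversAbove lam := by
  apply Finset.ext
  intro μ
  rw [mem_pieriSet, mem_coversAbove, covers_iff]

lemma erase_isLowerSet {μ : YoungDiagram} {b : ℕ × ℕ}
    (h1 : (b.1 + 1, b.2) ∉ μ) (h2 : (b.1, b.2 + 1) ∉ μ) :
    IsLowerSet ((μ.cells.erase b : Finset (ℕ × ℕ)) : Set (ℕ × ℕ)) := by
  intro x y hyx hx
  simp only [coe_erase, Set.mem_diff, Set.mem_singleton_iff, mem_coe,
    YoungDiagram.mem_cells] at hx ⊢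
  obtain ⟨hxμ, hxb⟩ := hx
  obtain ⟨hy1, hy2⟩ : y.1 ≤ x.1 ∧ y.2 ≤ x.2 := Prod.le_def.mp hyx
  refine ⟨μ.up_left_mem hy1 hy2 (by simpa using hxμ), ?_⟩
  rintro rfl
  have hne : ¬(x.1 = y.1 ∧ x.2 = y.2) := fun hc => hxb (Prod.ext hc.1 hc.2)
  have h : y.1 < x.1 ∨ y.2 < x.2 := by omega
  rcases h with h | h
  · exact h1 (μ.up_left_mem (show y.1 + 1 ≤ x.1 by omega) hy2 (by simpa using hxμ))
  · exact h2 (μ.up_left_mem hy1 (show y.2 + 1 ≤ x.2 by omega) (by simpa using hxμ))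

lemma insert_isLowerSet {lam : YoungDiagram} {b : ℕ × ℕ}
    (h1 : b.1 = 0 ∨ (b.1 - 1, b.2) ∈ lam) (h2 : b.2 = 0 ∨ (b.1, b.2 - 1) ∈ lam) :
    IsLowerSet ((insert b lam.cells : Finset (ℕ × ℕ)) : Set (ℕ × ℕ)) := by
  intro x y hyx hx
  simp only [coe_insert, Set.mem_insert_iff, mem_coe, YoungDiagram.mem_cells] at hx ⊢
  obtain ⟨hy1, hy2⟩ : y.1 ≤ x.1 ∧ y.2 ≤ x.2 := Prod.le_def.mp hyx
  rcases hx with rfl | hxlam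
  · by_cases hyb : y = x
    · exact Or.inl hyb
    · right
      have hne : ¬(y.1 = x.1 ∧ y.2 = x.2) := fun hc => hyb (Prod.ext hc.1 hc.2)
      have h : y.1 < x.1 ∨ y.2 < x.2 := by omega
      rcases h with h | h
      · rcases h1 with h1 | h1
        · omega
        · exact lam.up_left_mem (show y.1 ≤ x.1 - 1 by omega) hy2 h1
      · rcases h2 with h2 | h2
        · omega
        · exact lam.up_left_mem hy1 (show y.2 ≤ x.2 - 1 by omega) h2
  · exact Or.inr (lam.up_left_mem hy1 hy2 hxlam)

lemma remContent_erase {μ : YoungDiagram} {b : ℕ × ℕ} (hb : b ∈ μ.cells)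
    (h : IsLowerSet ((μ.cells.erase b : Finset (ℕ × ℕ)) : Set (ℕ × ℕ))) :
    remContent (mkYD (μ.cells.erase b)) μ = (b.2 : ℤ) - (b.1 : ℤ) := by
  rw [remContent, mkYD_cells h, Finset.sdiff_erase_self hb, Finset.sum_singleton]

lemma remContent_insert {lam : YoungDiagram} {b : ℕ × ℕ} (hb : b ∉ lam.cells)
    (h : IsLowerSet ((insert b lam.cells : Finset (ℕ × ℕ)) : Set (ℕ × ℕ))) :
    remContent lam (mkYD (insert b lam.cells)) = (b.2 : ℤ) - (b.1 : ℤ) := by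
  rw [remContent, mkYD_cells h]
  have : insert b lam.cells \ lam.cells = {b} := by
    ext c
    simp only [mem_sdiff, mem_insert, mem_singleton]
    constructor
    · rintro ⟨rfl | hc, hcl⟩
      · rfl
      · exact absurd hc hcl
    · rintro rfl; exact ⟨Or.inl rfl, hb⟩
  rw [this, Finset.sum_singleton]

/-- Condition on a cell `b` of `μ \ lam` so that `μ` minus `b` is a diagram `ν` with
`ν/lam` a horizontal strip. -/
def P1 (lam μ : YoungDiagram) (b : ℕ × ℕ) : Prop :=
  (b.1 + 1, b.2) ∉ μ ∧ (b.1, b.2 + 1) ∉ μ ∧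
    ∀ c ∈ μ.cells \ lam.cells, c ≠ b → (c.1 + 1, c.2) ∈ μ → (c.1 + 1, c.2) = b

/-- Condition on a cell `b` of `μ \ lam` so that `lam` plus `b` is a diagram `τ` with
`μ/τ` a horizontal strip. -/
def P2 (lam μ : YoungDiagram) (b : ℕ × ℕ) : Prop :=
  (b.1 = 0 ∨ (b.1 - 1, b.2) ∈ lam) ∧ (b.2 = 0 ∨ (b.1, b.2 - 1) ∈ lam) ∧
    ∀ c ∈ μ.cells \ lam.cells, c ≠ b → (c.1 + 1, c.2) ∉ μ

lemma p1_lowerSet {lam μ : YoungDiagram} {b : ℕ × ℕ} (h : P1 lam μ b) :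
    IsLowerSet ((μ.cells.erase b : Finset (ℕ × ℕ)) : Set (ℕ × ℕ)) :=
  erase_isLowerSet h.1 h.2.1

lemma p2_lowerSet {lam μ : YoungDiagram} {b : ℕ × ℕ} (h : P2 lam μ b) :
    IsLowerSet ((insert b lam.cells : Finset (ℕ × ℕ)) : Set (ℕ × ℕ)) :=
  insert_isLowerSet h.1 h.2.1

lemma img1 {k : ℕ} {lam μ : YoungDiagram} (hsub : lam.cells ⊆ μ.cells)
    (hc : μ.cells.card = lam.cells.card + (k + 1)) :
    (pieriSet k lam).filter (fun ν => Covers ν μ) =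
      ((μ.cells \ lam.cells).filter (P1 lam μ)).image (fun b => mkYD (μ.cells.erase b)) := by
  ext ν
  simp only [mem_filter, mem_image, mem_pieriSet, mem_sdiff]
  constructor
  · rintro ⟨⟨hcard, hlsub, hstrip⟩, hνsub, hc2⟩
    have hdiff : (μ.cells \ ν.cells).card = 1 := by rw [card_sdiff_of_subset hνsub]; omega
    obtain ⟨b, hb⟩ := card_eq_one.1 hdiff
    have hbmem := mem_sdiff.1 (hb ▸ mem_singleton_self b)
    have hbμ : b ∈ μ.cells := hbmem.1
    have hbν : b ∉ ν.cells := hbmem.2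
    have hcells : ν.cells = μ.cells.erase b := by
      ext x
      simp only [mem_erase]
      constructor
      · intro hx
        exact ⟨fun he => hbν (he ▸ hx), hνsub hx⟩
      · rintro ⟨hxb, hxμ⟩
        by_contra hxν
        have hxd : x ∈ μ.cells \ ν.cells := mem_sdiff.2 ⟨hxμ, hxν⟩
        rw [hb, mem_singleton] at hxd
        exact hxb hxd
    have hblam : b ∉ lam.cells := fun hl => hbν (hlsub hl)
    have h1 : (b.1 + 1, b.2) ∉ μ := by
      intro hmem
      have h1ν : (b.1 + 1, b.2) ∈ ν := by
        rw [← YoungDiagram.mem_cells, hcells]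
        exact mem_erase.2 ⟨by simp [Prod.ext_iff], (YoungDiagram.mem_cells _).2 hmem⟩
      have : (b.1, b.2) ∈ ν := ν.up_left_mem (Nat.le_succ _) le_rfl h1ν
      exact hbν ((YoungDiagram.mem_cells _).1 this)
    have h2 : (b.1, b.2 + 1) ∉ μ := by
      intro hmem
      have h1ν : (b.1, b.2 + 1) ∈ ν := by
        rw [← YoungDiagram.mem_cells, hcells]
        exact mem_erase.2 ⟨by simp [Prod.ext_iff], (YoungDiagram.mem_cells _).2 hmem⟩
      have : (b.1, b.2) ∈ ν := ν.up_left_mem le_rfl (Nat.le_succ _) h1ν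
      exact hbν ((YoungDiagram.mem_cells _).1 this)
    refine ⟨b, ⟨⟨hbμ, hblam⟩, h1, h2, ?_⟩, ?_⟩
    · intro c hcmem hcb hcbelow
      by_contra hne
      have hcν : (c.1 + 1, c.2) ∈ ν.cells := by
        rw [hcells]
        exact mem_erase.2 ⟨hne, (YoungDiagram.mem_cells _).2 hcbelow⟩
      have hcmem' := mem_sdiff.1 hcmem
      have hcνc : c ∈ ν.cells := by
        rw [hcells]; exact mem_erase.2 ⟨hcb, hcmem'.1⟩
      exact hstrip c hcνc hcmem'.2 hcν
    · apply YoungDiagram.ext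
      rw [mkYD_cells (erase_isLowerSet h1 h2), hcells]
  · rintro ⟨b, ⟨⟨hbμ, hblam⟩, h1, h2, h3⟩, rfl⟩
    have hlow := erase_isLowerSet h1 h2
    have hcells : (mkYD (μ.cells.erase b)).cells = μ.cells.erase b := mkYD_cells hlow
    have hsub2 : lam.cells ⊆ μ.cells.erase b := by
      intro x hx
      exact mem_erase.2 ⟨fun he => hblam (he ▸ hx), hsub hx⟩
    have hcard2 : (μ.cells.erase b).card = lam.cells.card + k := by
      rw [card_erase_of_mem hbμ]; omega
    refine ⟨⟨by rw [hcells]; exact hcard2, ?_, ?_⟩, ?_, ?_⟩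
    · rw [hcells]; exact hsub2
    · intro c hcν hclam hcbelow
      rw [hcells] at hcν hcbelow
      have hcμ : c ∈ μ.cells := (mem_erase.1 hcν).2
      have hcb : c ≠ b := (mem_erase.1 hcν).1
      have := h3 c (mem_sdiff.2 ⟨hcμ, hclam⟩) hcb ((YoungDiagram.mem_cells _).1 ((mem_erase.1 hcbelow).2))
      exact (mem_erase.1 hcbelow).1 this
    · rw [hcells]; exact erase_subset _ _
    · rw [hcells, card_erase_of_mem hbμ]; omega

lemma img2 {k : ℕ} {lam μ : YoungDiagram} (hsub : lam.cells ⊆ μ.cells)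
    (hc : μ.cells.card = lam.cells.card + (k + 1)) :
    (coversAbove lam).filter (fun τ => μ ∈ pieriSet k τ) =
      ((μ.cells \ lam.cells).filter (P2 lam μ)).image (fun b => mkYD (insert b lam.cells)) := by
  ext τ
  simp only [mem_filter, mem_image, mem_coversAbove, mem_pieriSet, mem_sdiff]
  constructor
  · rintro ⟨⟨hlsub, hcard⟩, hcard2, hτsub, hstrip⟩
    have hdiff : (τ.cells \ lam.cells).card = 1 := by rw [card_sdiff_of_subset hlsub]; omega
    obtain ⟨b, hb⟩ := card_eq_one.1 hdiff
    have hbmem := mem_sdiff.1 (hb ▸ mem_singleton_self b)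
    have hbτ : b ∈ τ.cells := hbmem.1
    have hblam : b ∉ lam.cells := hbmem.2
    have hbμ : b ∈ μ.cells := hτsub hbτ
    have hcells : τ.cells = insert b lam.cells := by
      ext x
      simp only [mem_insert]
      constructor
      · intro hx
        by_cases hxb : x = b
        · exact Or.inl hxb
        · right
          by_contra hxlam
          have hxd : x ∈ τ.cells \ lam.cells := mem_sdiff.2 ⟨hx, hxlam⟩
          rw [hb, mem_singleton] at hxd
          exact hxb hxd
      · rintro (rfl | hx)
        · exact hbτ
        · exact hlsub hx
    have ha1 : b.1 = 0 ∨ (b.1 - 1, b.2) ∈ lam := by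
      by_cases hb1 : b.1 = 0
      · exact Or.inl hb1
      · right
        have : (b.1 - 1, b.2) ∈ τ := τ.up_left_mem (by omega) le_rfl ((YoungDiagram.mem_cells _).2 hbτ)
        have hm : (b.1 - 1, b.2) ∈ τ.cells := (YoungDiagram.mem_cells _).1 this
        rw [hcells, mem_insert] at hm
        rcases hm with he | hm
        · exfalso
          have := congrArg Prod.fst he
          simp at this; omega
        · exact (YoungDiagram.mem_cells _).2 hm
    have ha2 : b.2 = 0 ∨ (b.1, b.2 - 1) ∈ lam := by
      by_cases hb2 : b.2 = 0
      · exact Or.inl hb2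
      · right
        have : (b.1, b.2 - 1) ∈ τ := τ.up_left_mem le_rfl (by omega) ((YoungDiagram.mem_cells _).2 hbτ)
        have hm : (b.1, b.2 - 1) ∈ τ.cells := (YoungDiagram.mem_cells _).1 this
        rw [hcells, mem_insert] at hm
        rcases hm with he | hm
        · exfalso
          have := congrArg Prod.snd he
          simp at this; omega
        · exact (YoungDiagram.mem_cells _).2 hm
    refine ⟨b, ⟨⟨hbμ, hblam⟩, ha1, ha2, ?_⟩, ?_⟩
    · intro c hcmem hcb
      have hcmem' := mem_sdiff.1 hcmem
      have hcτ : c ∉ τ.cells := by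
        rw [hcells, mem_insert]
        push_neg
        exact ⟨hcb, hcmem'.2⟩
      exact hstrip c hcmem'.1 hcτ
    · apply YoungDiagram.ext
      rw [mkYD_cells (insert_isLowerSet ha1 ha2), hcells]
  · rintro ⟨b, ⟨⟨hbμ, hblam⟩, ha1, ha2, h3⟩, rfl⟩
    have hlow := insert_isLowerSet ha1 ha2
    have hcells : (mkYD (insert b lam.cells)).cells = insert b lam.cells := mkYD_cells hlow
    have hcard : (insert b lam.cells).card = lam.cells.card + 1 := card_insert_of_notMem hblam
    refine ⟨⟨?_, ?_⟩, ?_, ?_, ?_⟩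
    · rw [hcells]; exact subset_insert _ _
    · rw [hcells]; exact hcard
    · rw [hcells, hcard]; omega
    · rw [hcells]
      intro x hx
      rcases mem_insert.1 hx with rfl | hx
      · exact hbμ
      · exact hsub hx
    · intro c hcμ hcτ
      rw [hcells, mem_insert] at hcτ
      push_neg at hcτ
      exact h3 c (mem_sdiff.2 ⟨hcμ, hcτ.2⟩) hcτ.1

lemma mem_cells_of_pair {μ : YoungDiagram} {i j : ℕ} : (i, j) ∈ μ.cells ↔ (i, j) ∈ μ :=
  YoungDiagram.mem_cells _

/-- Case A of the key identity: `μ / lam` is a horizontal strip. -/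
lemma keyA {k : ℕ} {lam μ : YoungDiagram} (hsub : lam.cells ⊆ μ.cells)
    (hcard : μ.cells.card = lam.cells.card + (k + 1))
    (hB : ∀ c ∈ μ.cells \ lam.cells, (c.1 + 1, c.2) ∉ μ) :
    (∑ b ∈ (μ.cells \ lam.cells).filter (P1 lam μ), ((b.2 : ℚ) - (b.1 : ℚ))) +
      (((μ.cells \ lam.cells).filter (P2 lam μ)).card : ℚ)
    = ((k : ℚ) + 1) + ∑ b ∈ (μ.cells \ lam.cells).filter (P2 lam μ), ((b.2 : ℚ) - (b.1 : ℚ)) := by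
  set S := μ.cells \ lam.cells with hSdef
  have hScard : S.card = k + 1 := by rw [hSdef, card_sdiff_of_subset hsub]; omega
  have hSmem : ∀ b ∈ S, b ∈ μ.cells ∧ b ∉ lam.cells := fun b hb => mem_sdiff.1 hb
  -- simplify the two filters
  have hf1 : S.filter (P1 lam μ) = S.filter (fun b => (b.1, b.2 + 1) ∉ μ) := by
    apply filter_congr
    intro b hb
    constructor
    · intro h; exact h.2.1
    · intro h
      exact ⟨hB b hb, h, fun c hc _ hcmem => absurd hcmem (hB c hc)⟩
  have hf2 : S.filter (P2 lam μ) = S.filter (fun b => b.2 = 0 ∨ (b.1, b.2 - 1) ∈ lam) := by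
    apply filter_congr
    intro b hb
    constructor
    · intro h; exact h.2.1
    · intro h
      refine ⟨?_, h, fun c hc _ => hB c hc⟩
      by_cases hb1 : b.1 = 0
      · exact Or.inl hb1
      · right
        by_contra hnl
        have hmem : (b.1 - 1, b.2) ∈ μ :=
          μ.up_left_mem (by omega) le_rfl ((YoungDiagram.mem_cells _).2 (hSmem b hb).1)
        have hmemS : (b.1 - 1, b.2) ∈ S :=
          mem_sdiff.2 ⟨(YoungDiagram.mem_cells _).1 hmem, fun hl => hnl hl⟩
        have := hB _ hmemS
        simp only at this
        have heq : b.1 - 1 + 1 = b.1 := by omega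
        rw [heq] at this
        exact this ((YoungDiagram.mem_cells _).2 (hSmem b hb).1)
  rw [hf1, hf2]
  set R := S.filter (fun b => (b.1, b.2 + 1) ∉ μ) with hRdef
  set Lf := S.filter (fun b => b.2 = 0 ∨ (b.1, b.2 - 1) ∈ lam) with hLdef
  have hRS : R ⊆ S := filter_subset _ _
  have hLS : Lf ⊆ S := filter_subset _ _
  -- the shift bijection
  have hshift : ∑ b ∈ S \ R, (((b.2 : ℚ) - (b.1 : ℚ)) + 1) = ∑ b ∈ S \ Lf, ((b.2 : ℚ) - (b.1 : ℚ)) := by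
    apply Finset.sum_nbij' (i := fun b => (b.1, b.2 + 1)) (j := fun b => (b.1, b.2 - 1))
    · intro b hb
      rw [mem_sdiff, hRdef, mem_filter] at hb
      push_neg at hb
      have hbμ : (b.1, b.2 + 1) ∈ μ := hb.2 hb.1
      have hbS : b ∈ μ.cells ∧ b ∉ lam.cells := hSmem b hb.1
      have hnl : (b.1, b.2 + 1) ∉ lam := by
        intro hl
        exact hbS.2 ((YoungDiagram.mem_cells _).1
          (lam.up_left_mem le_rfl (Nat.le_succ _) hl))
      rw [mem_sdiff, hLdef, mem_filter]
      constructor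
      · exact mem_sdiff.2 ⟨(YoungDiagram.mem_cells _).1 hbμ,
          fun hl => hnl ((YoungDiagram.mem_cells _).2 hl)⟩
      · push_neg
        intro hmemS
        constructor
        · simp
        · simp only [Nat.add_sub_cancel]
          intro hl
          exact hbS.2 ((YoungDiagram.mem_cells _).1 ((YoungDiagram.mem_cells _).2 hl))
    · intro b hb
      rw [mem_sdiff, hLdef, mem_filter] at hb
      push_neg at hb
      have hb2 := hb.2 hb.1
      have hb2pos : 0 < b.2 := by
        rcases Nat.eq_zero_or_pos b.2 with h | h
        · exact absurd h hb2.1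
        · exact h
      have hbS : b ∈ μ.cells ∧ b ∉ lam.cells := hSmem b hb.1
      have hbμ' : (b.1, b.2 - 1) ∈ μ :=
        μ.up_left_mem le_rfl (by omega) ((YoungDiagram.mem_cells _).2 hbS.1)
      rw [mem_sdiff, hRdef, mem_filter]
      constructor
      · exact mem_sdiff.2 ⟨(YoungDiagram.mem_cells _).1 hbμ', hb2.2⟩
      · push_neg
        intro hmemS
        have heq : b.2 - 1 + 1 = b.2 := by omega
        simp only [heq]
        exact (YoungDiagram.mem_cells _).2 hbS.1
    · intro b _; simp
    · intro b hb
      rw [mem_sdiff, hLdef, mem_filter] at hb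
      push_neg at hb
      have hb2 := hb.2 hb.1
      have : 0 < b.2 := by
        rcases Nat.eq_zero_or_pos b.2 with h | h
        · exact absurd h hb2.1
        · exact h
      have : b.2 - 1 + 1 = b.2 := by omega
      simp [this]
    · intro b _
      push_cast
      ring
  -- |R| = |Lf|
  have hRcard : R.card = (S.image Prod.fst).card := by
    rw [← card_image_of_injOn (f := Prod.fst) ?inj]
    · congr 1
      apply subset_antisymm
      · exact image_subset_image hRS
      · intro i hi
        obtain ⟨b, hbS, rfl⟩ := mem_image.1 hi
        have hM : (S.filter (fun c => c.1 = b.1)).Nonempty := ⟨b, mem_filter.2 ⟨hbS, rfl⟩⟩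
        obtain ⟨c, hcM, hcmax⟩ := Finset.exists_max_image _ (fun c => c.2) hM
        have hcS := (mem_filter.1 hcM).1
        have hcfst : c.1 = b.1 := (mem_filter.1 hcM).2
        have hcR : c ∈ R := by
          rw [hRdef, mem_filter]
          refine ⟨hcS, ?_⟩
          intro hmem
          have hnl : (c.1, c.2 + 1) ∉ lam.cells := by
            intro hl
            exact (hSmem c hcS).2 ((YoungDiagram.mem_cells _).1
              (lam.up_left_mem le_rfl (Nat.le_succ _) ((YoungDiagram.mem_cells _).2 hl)))
          have hmemS : (c.1, c.2 + 1) ∈ S :=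
            mem_sdiff.2 ⟨(YoungDiagram.mem_cells _).1 hmem, hnl⟩
          have h2 := hcmax _ (mem_filter.2 ⟨hmemS, by simp [hcfst]⟩)
          have h3 : c.2 + 1 ≤ c.2 := h2
          omega
        exact mem_image.2 ⟨c, hcR, hcfst⟩
    case inj =>
      intro b hb b' hb' he
      simp only [hRdef, coe_filter, Set.mem_setOf_eq] at hb hb'
      rcases lt_trichotomy b.2 b'.2 with h | h | h
      · exfalso
        have : (b.1, b.2 + 1) ∈ μ :=
          μ.up_left_mem (le_of_eq he) (by omega)
            ((YoungDiagram.mem_cells _).2 (hSmem b' hb'.1).1)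
        exact hb.2 this
      · exact Prod.ext he h
      · exfalso
        have : (b'.1, b'.2 + 1) ∈ μ :=
          μ.up_left_mem (le_of_eq he.symm) (by omega)
            ((YoungDiagram.mem_cells _).2 (hSmem b hb.1).1)
        exact hb'.2 this
  have hLcard : Lf.card = (S.image Prod.fst).card := by
    rw [← card_image_of_injOn (f := Prod.fst) ?inj2]
    · congr 1
      apply subset_antisymm
      · exact image_subset_image hLS
      · intro i hi
        obtain ⟨b, hbS, rfl⟩ := mem_image.1 hi
        have hM : (S.filter (fun c => c.1 = b.1)).Nonempty := ⟨b, mem_filter.2 ⟨hbS, rfl⟩⟩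
        obtain ⟨c, hcM, hcmin⟩ := Finset.exists_min_image _ (fun c => c.2) hM
        have hcS := (mem_filter.1 hcM).1
        have hcfst : c.1 = b.1 := (mem_filter.1 hcM).2
        have hcL : c ∈ Lf := by
          rw [hLdef, mem_filter]
          refine ⟨hcS, ?_⟩
          by_cases hc2 : c.2 = 0
          · exact Or.inl hc2
          · right
            by_contra hnl
            have hmem : (c.1, c.2 - 1) ∈ μ :=
              μ.up_left_mem le_rfl (by omega) ((YoungDiagram.mem_cells _).2 (hSmem c hcS).1)
            have hmemS : (c.1, c.2 - 1) ∈ S :=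
              mem_sdiff.2 ⟨(YoungDiagram.mem_cells _).1 hmem, fun hl => hnl hl⟩
            have h2 := hcmin _ (mem_filter.2 ⟨hmemS, by simp [hcfst]⟩)
            have h3 : c.2 ≤ c.2 - 1 := h2
            omega
        exact mem_image.2 ⟨c, hcL, hcfst⟩
    case inj2 =>
      intro b hb b' hb' he
      simp only [hLdef, coe_filter, Set.mem_setOf_eq] at hb hb'
      rcases lt_trichotomy b.2 b'.2 with h | h | h
      · exfalso
        rcases hb'.2 with h0 | hl
        · omega
        · have : b ∈ lam.cells := by
            have := lam.up_left_mem (le_of_eq he) (show b.2 ≤ b'.2 - 1 by omega) hl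
            exact (YoungDiagram.mem_cells _).1 this
          exact (hSmem b hb.1).2 this
      · exact Prod.ext he h
      · exfalso
        rcases hb.2 with h0 | hl
        · omega
        · have : b' ∈ lam.cells := by
            have := lam.up_left_mem (le_of_eq he.symm) (show b'.2 ≤ b.2 - 1 by omega) hl
            exact (YoungDiagram.mem_cells _).1 this
          exact (hSmem b' hb'.1).2 this
  -- now conclude by arithmetic
  have e1 : ∑ b ∈ S \ R, ((b.2 : ℚ) - (b.1 : ℚ)) + ∑ b ∈ R, ((b.2 : ℚ) - (b.1 : ℚ))
      = ∑ b ∈ S, ((b.2 : ℚ) - (b.1 : ℚ)) := sum_sdiff hRS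
  have e2 : ∑ b ∈ S \ Lf, ((b.2 : ℚ) - (b.1 : ℚ)) + ∑ b ∈ Lf, ((b.2 : ℚ) - (b.1 : ℚ))
      = ∑ b ∈ S, ((b.2 : ℚ) - (b.1 : ℚ)) := sum_sdiff hLS
  have e3 : ∑ b ∈ S \ R, (((b.2 : ℚ) - (b.1 : ℚ)) + 1)
      = ∑ b ∈ S \ R, ((b.2 : ℚ) - (b.1 : ℚ)) + ((S \ R).card : ℚ) := by
    rw [sum_add_distrib, sum_const, nsmul_eq_mul, mul_one]
  have e4 : (S \ R).card + R.card = S.card := card_sdiff_add_card_eq_card hRS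
  have e5 : ((S \ R).card : ℚ) + (R.card : ℚ) = (k : ℚ) + 1 := by
    have e4' : (S \ R).card + R.card = k + 1 := by rw [e4, hScard]
    exact_mod_cast congrArg (Nat.cast : ℕ → ℚ) e4'

  have e6 : (R.card : ℚ) = (Lf.card : ℚ) := by rw [hRcard, hLcard]
  linarith [hshift, e1, e2, e3, e5, e6]

/-- Case B of the key identity: some box of `μ / lam` has a box of `μ` below it. -/
lemma keyB {lam μ : YoungDiagram} (hsub : lam.cells ⊆ μ.cells)
    {a : ℕ × ℕ} (haS : a ∈ μ.cells \ lam.cells) (haB : (a.1 + 1, a.2) ∈ μ) :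
    (∑ b ∈ (μ.cells \ lam.cells).filter (P1 lam μ), ((b.2 : ℚ) - (b.1 : ℚ))) +
      (((μ.cells \ lam.cells).filter (P2 lam μ)).card : ℚ)
    = ∑ b ∈ (μ.cells \ lam.cells).filter (P2 lam μ), ((b.2 : ℚ) - (b.1 : ℚ)) := by
  set S := μ.cells \ lam.cells with hSdef
  have haμ : a ∈ μ.cells := (mem_sdiff.1 haS).1
  have halam : a ∉ lam.cells := (mem_sdiff.1 haS).2
  by_cases hUniq : ∀ c ∈ S, (c.1 + 1, c.2) ∈ μ → c = a
  · -- exactly one bad box `a`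
    have hb0S : (a.1 + 1, a.2) ∈ S := by
      refine mem_sdiff.2 ⟨(YoungDiagram.mem_cells _).1 haB, ?_⟩
      intro hl
      exact halam ((YoungDiagram.mem_cells _).1
        (lam.up_left_mem (Nat.le_succ _) le_rfl ((YoungDiagram.mem_cells _).2 hl)))
    have hane : a ≠ (a.1 + 1, a.2) := by
      intro he
      have := congrArg Prod.fst he
      simp only at this
      omega
    have hP1 : P1 lam μ (a.1 + 1, a.2) := by
      refine ⟨?_, ?_, ?_⟩
      · intro h
        have := hUniq _ hb0S (by simpa using h)
        exact hane this.symm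
      · intro h
        have hc1 : (a.1, a.2 + 1) ∈ μ := μ.up_left_mem (Nat.le_succ _) le_rfl (by simpa using h)
        have hc1l : (a.1, a.2 + 1) ∉ lam.cells := by
          intro hl
          exact halam ((YoungDiagram.mem_cells _).1
            (lam.up_left_mem le_rfl (Nat.le_succ _) ((YoungDiagram.mem_cells _).2 hl)))
        have hc1S : (a.1, a.2 + 1) ∈ S := mem_sdiff.2 ⟨(YoungDiagram.mem_cells _).1 hc1, hc1l⟩
        have := hUniq _ hc1S (by simpa using h)
        have := congrArg Prod.snd this
        simp only at this
        omega
      · intro c hc hcne hcb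
        have := hUniq c hc hcb
        rw [this]
    have hfil1 : S.filter (P1 lam μ) = {(a.1 + 1, a.2)} := by
      apply eq_singleton_iff_unique_mem.2
      refine ⟨mem_filter.2 ⟨hb0S, hP1⟩, ?_⟩
      intro b hb
      obtain ⟨hbS, hb1, hb2, hb3⟩ := mem_filter.1 hb
      have hanb : a ≠ b := by
        rintro rfl
        exact hb1 haB
      exact (hb3 a haS hanb haB).symm
    have hP2 : P2 lam μ a := by
      refine ⟨?_, ?_, ?_⟩
      · by_cases h0 : a.1 = 0
        · exact Or.inl h0
        · right
          by_contra hnl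
          have hc : (a.1 - 1, a.2) ∈ μ :=
            μ.up_left_mem (by omega) le_rfl ((YoungDiagram.mem_cells _).2 haμ)
          have hcS : (a.1 - 1, a.2) ∈ S :=
            mem_sdiff.2 ⟨(YoungDiagram.mem_cells _).1 hc, fun hl => hnl hl⟩
          have hbelow : ((a.1 - 1 : ℕ) + 1, a.2) ∈ μ := by
            have he : a.1 - 1 + 1 = a.1 := by omega
            rw [he]
            exact (YoungDiagram.mem_cells _).2 haμ
          have := hUniq _ hcS hbelow
          have := congrArg Prod.fst this
          simp only at this
          omega
      · by_cases h0 : a.2 = 0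
        · exact Or.inl h0
        · right
          by_contra hnl
          have hc : (a.1, a.2 - 1) ∈ μ :=
            μ.up_left_mem le_rfl (by omega) ((YoungDiagram.mem_cells _).2 haμ)
          have hcS : (a.1, a.2 - 1) ∈ S :=
            mem_sdiff.2 ⟨(YoungDiagram.mem_cells _).1 hc, fun hl => hnl hl⟩
          have hbelow : (a.1 + 1, a.2 - 1) ∈ μ :=
            μ.up_left_mem le_rfl (by omega) haB
          have := hUniq _ hcS hbelow
          have := congrArg Prod.snd this
          simp only at this
          omega
      · intro c hc hcne hcb
        exact hcne (hUniq c hc hcb)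
    have hfil2 : S.filter (P2 lam μ) = {a} := by
      apply eq_singleton_iff_unique_mem.2
      refine ⟨mem_filter.2 ⟨haS, hP2⟩, ?_⟩
      intro b hb
      obtain ⟨hbS, hb1, hb2, hb3⟩ := mem_filter.1 hb
      by_contra hne
      exact hb3 a haS (fun he => hne he.symm) haB
    rw [hfil1, hfil2, sum_singleton, sum_singleton, card_singleton]
    push_cast
    ring
  · -- at least two bad boxes
    push_neg at hUniq
    obtain ⟨a', ha'S, ha'B, ha'ne⟩ := hUniq
    have hfil1 : S.filter (P1 lam μ) = ∅ := by
      rw [filter_eq_empty_iff]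
      intro b hbS hP1
      obtain ⟨hb1, hb2, hb3⟩ := hP1
      have hanb : a ≠ b := by rintro rfl; exact hb1 haB
      have ha'nb : a' ≠ b := by rintro rfl; exact hb1 ha'B
      have e1 := hb3 a haS hanb haB
      have e2 := hb3 a' ha'S ha'nb ha'B
      apply ha'ne
      have f1 := congrArg Prod.fst e1
      have f2 := congrArg Prod.fst e2
      have s1 := congrArg Prod.snd e1
      have s2 := congrArg Prod.snd e2
      simp only at f1 f2 s1 s2
      apply Prod.ext <;> omega
    have hfil2 : S.filter (P2 lam μ) = ∅ := by
      rw [filter_eq_empty_iff]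
      intro b hbS hP2
      obtain ⟨hb1, hb2, hb3⟩ := hP2
      by_cases hab : a = b
      · exact hb3 a' ha'S (fun he => ha'ne (he.trans hab.symm)) ha'B
      · exact hb3 a haS hab haB
    rw [hfil1, hfil2]
    simp

/-- The key combinatorial identity (coefficientwise Leibniz rule for the
content-weighted box-adding operator against multiplication by `h_k`). -/
theorem keyc (k : ℕ) (lam μ : YoungDiagram) :
    (∑ ν ∈ (pieriSet k lam).filter (fun ν => Covers ν μ), (remContent ν μ : ℚ)) +
      (((coversAbove lam).filter (fun τ => μ ∈ pieriSet k τ)).card : ℚ)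
    = ((k : ℚ) + 1) * (if μ ∈ pieriSet (k + 1) lam then 1 else 0) +
      ∑ τ ∈ (coversAbove lam).filter (fun τ => μ ∈ pieriSet k τ), (remContent lam τ : ℚ) := by
  by_cases hcard : μ.cells.card = lam.cells.card + (k + 1)
  case neg =>
    have e1 : (pieriSet k lam).filter (fun ν => Covers ν μ) = ∅ := by
      rw [filter_eq_empty_iff]
      intro ν hν hcov
      rw [mem_pieriSet] at hν
      obtain ⟨_, h2⟩ := hcov
      exact hcard (by omega)
    have e2 : (coversAbove lam).filter (fun τ => μ ∈ pieriSet k τ) = ∅ := by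
      rw [filter_eq_empty_iff]
      intro τ hτ hμ
      rw [mem_coversAbove] at hτ
      rw [mem_pieriSet] at hμ
      obtain ⟨_, h2⟩ := hτ
      obtain ⟨h3, _⟩ := hμ
      exact hcard (by omega)
    have e3 : μ ∉ pieriSet (k + 1) lam := by
      rw [mem_pieriSet]
      intro h
      exact hcard (by omega)
    rw [e1, e2, if_neg e3]
    simp
  case pos =>
    by_cases hsub : lam.cells ⊆ μ.cells
    case neg =>
      have e1 : (pieriSet k lam).filter (fun ν => Covers ν μ) = ∅ := by
        rw [filter_eq_empty_iff]
        intro ν hν hcov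
        rw [mem_pieriSet] at hν
        exact hsub (hν.2.1.trans hcov.1)
      have e2 : (coversAbove lam).filter (fun τ => μ ∈ pieriSet k τ) = ∅ := by
        rw [filter_eq_empty_iff]
        intro τ hτ hμ
        rw [mem_coversAbove] at hτ
        rw [mem_pieriSet] at hμ
        exact hsub (hτ.1.trans hμ.2.1)
      have e3 : μ ∉ pieriSet (k + 1) lam := by
        rw [mem_pieriSet]
        intro h
        exact hsub h.2.1
      rw [e1, e2, if_neg e3]
      simp
    case pos =>
      -- rewrite the two diagram sums as sums over cells
      have hinj1 : ∀ b ∈ (μ.cells \ lam.cells).filter (P1 lam μ),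
          ∀ b' ∈ (μ.cells \ lam.cells).filter (P1 lam μ),
          mkYD (μ.cells.erase b) = mkYD (μ.cells.erase b') → b = b' := by
        intro b hb b' hb' he
        have hc1 := mkYD_cells (p1_lowerSet (mem_filter.1 hb).2)
        have hc2 := mkYD_cells (p1_lowerSet (mem_filter.1 hb').2)
        have hee : μ.cells.erase b = μ.cells.erase b' := by rw [← hc1, ← hc2, he]
        by_contra hne
        have hbμ : b ∈ μ.cells := (mem_sdiff.1 (mem_filter.1 hb).1).1
        have hbe : b ∈ μ.cells.erase b' := mem_erase.2 ⟨hne, hbμ⟩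
        rw [← hee] at hbe
        exact (notMem_erase _ _) hbe
      have hinj2 : ∀ b ∈ (μ.cells \ lam.cells).filter (P2 lam μ),
          ∀ b' ∈ (μ.cells \ lam.cells).filter (P2 lam μ),
          mkYD (insert b lam.cells) = mkYD (insert b' lam.cells) → b = b' := by
        intro b hb b' hb' he
        have hc1 := mkYD_cells (p2_lowerSet (mem_filter.1 hb).2)
        have hc2 := mkYD_cells (p2_lowerSet (mem_filter.1 hb').2)
        have hee : insert b lam.cells = insert b' lam.cells := by rw [← hc1, ← hc2, he]
        have : b ∈ insert b' lam.cells := hee ▸ mem_insert_self b lam.cells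
        rcases mem_insert.1 this with h | h
        · exact h
        · exact absurd h (mem_sdiff.1 (mem_filter.1 hb).1).2
      rw [img1 hsub hcard, img2 hsub hcard, Finset.sum_image hinj1,
        Finset.card_image_of_injOn hinj2, Finset.sum_image hinj2]
      have hs1 : ∀ b ∈ (μ.cells \ lam.cells).filter (P1 lam μ),
          (remContent (mkYD (μ.cells.erase b)) μ : ℚ) = (b.2 : ℚ) - (b.1 : ℚ) := by
        intro b hb
        have hbμ : b ∈ μ.cells := (mem_sdiff.1 (mem_filter.1 hb).1).1
        rw [remContent_erase hbμ (p1_lowerSet (mem_filter.1 hb).2)]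
        push_cast
        ring
      have hs2 : ∀ b ∈ (μ.cells \ lam.cells).filter (P2 lam μ),
          (remContent lam (mkYD (insert b lam.cells)) : ℚ) = (b.2 : ℚ) - (b.1 : ℚ) := by
        intro b hb
        have hbl : b ∉ lam.cells := (mem_sdiff.1 (mem_filter.1 hb).1).2
        rw [remContent_insert hbl (p2_lowerSet (mem_filter.1 hb).2)]
        push_cast
        ring
      rw [Finset.sum_congr rfl hs1, Finset.sum_congr rfl hs2]
      by_cases hB : ∀ c ∈ μ.cells \ lam.cells, (c.1 + 1, c.2) ∉ μ
      · -- horizontal strip case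
        have hind : μ ∈ pieriSet (k + 1) lam := by
          rw [mem_pieriSet]
          refine ⟨hcard, hsub, ?_⟩
          intro c hc hcl hbel
          exact hB c (mem_sdiff.2 ⟨hc, hcl⟩) ((YoungDiagram.mem_cells _).2 hbel)
        rw [if_pos hind, mul_one]
        exact keyA hsub hcard hB
      · push_neg at hB
        obtain ⟨a, haS, haB⟩ := hB
        have hind : μ ∉ pieriSet (k + 1) lam := by
          rw [mem_pieriSet]
          rintro ⟨_, _, hstrip⟩
          exact hstrip a (mem_sdiff.1 haS).1 (mem_sdiff.1 haS).2
            ((YoungDiagram.mem_cells _).1 haB)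
        rw [if_neg hind, mul_zero, zero_add]
        exact keyB hsub haS haB

section Alg

variable {L : Type*} [CommRing L] [Algebra ℚ L]

/-- The coordinatewise pairing on finitely supported functions. -/
noncomputable def pairF : (YoungDiagram →₀ ℚ) →ₗ[ℚ] (YoungDiagram →₀ ℚ) →ₗ[ℚ] ℚ :=
  Finsupp.lsum ℚ (fun μ => LinearMap.toSpanSingleton ℚ ((YoungDiagram →₀ ℚ) →ₗ[ℚ] ℚ)
    (Finsupp.lapply μ))

/-- The "Hall" pairing on `L` making the basis `s` orthonormal. -/
noncomputable def pb (s : Module.Basis YoungDiagram ℚ L) : L →ₗ[ℚ] L →ₗ[ℚ] ℚ :=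
  (pairF.comp s.repr.toLinearMap).compl₂ s.repr.toLinearMap

lemma pb_basis_left (s : Module.Basis YoungDiagram ℚ L) (lam : YoungDiagram) (y : L) :
    pb s (s lam) y = s.repr y lam := by
  simp only [pb, pairF, LinearMap.compl₂_apply, LinearMap.comp_apply,
    LinearEquiv.coe_toLinearMap, Module.Basis.repr_self]
  rw [Finsupp.lsum_single]
  simp [LinearMap.toSpanSingleton_apply]

lemma pb_basis_right (s : Module.Basis YoungDiagram ℚ L) (x : L) (μ : YoungDiagram) :
    pb s x (s μ) = s.repr x μ := by
  simp only [pb, pairF, LinearMap.compl₂_apply, LinearMap.comp_apply,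
    LinearEquiv.coe_toLinearMap, Module.Basis.repr_self]
  rw [Finsupp.lsum_apply, LinearMap.finsupp_sum_apply, Finsupp.sum]
  have : ∀ ν ∈ (s.repr x).support,
      (LinearMap.toSpanSingleton ℚ ((YoungDiagram →₀ ℚ) →ₗ[ℚ] ℚ) (Finsupp.lapply ν))
        (s.repr x ν) (Finsupp.single μ 1)
      = if ν = μ then s.repr x ν else 0 := by
    intro ν _
    rw [LinearMap.toSpanSingleton_apply, LinearMap.smul_apply, Finsupp.lapply_apply,
      Finsupp.single_apply]
    by_cases h : ν = μ
    · simp [h, if_pos (Eq.symm h)]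
    · rw [if_neg h, if_neg (fun hh : μ = ν => h hh.symm)]
      simp
  rw [Finset.sum_congr rfl this, Finset.sum_ite_eq' (s.repr x).support μ (s.repr x)]
  by_cases h : μ ∈ (s.repr x).support
  · rw [if_pos h]
  · rw [if_neg h]
    exact (Finsupp.notMem_support_iff.1 h).symm

lemma repr_finsum (s : Module.Basis YoungDiagram ℚ L) (F : Finset YoungDiagram)
    (f : YoungDiagram → ℚ) (μ : YoungDiagram) :
    s.repr (∑ ν ∈ F, f ν • s ν) μ = if μ ∈ F then f μ else 0 := by
  rw [map_sum, Finsupp.finset_sum_apply]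
  have : ∀ ν ∈ F, (s.repr (f ν • s ν)) μ = if ν = μ then f ν else 0 := by
    intro ν _
    rw [map_smul, Module.Basis.repr_self, Finsupp.smul_single, smul_eq_mul, mul_one,
      Finsupp.single_apply]
  rw [Finset.sum_congr rfl this, Finset.sum_ite_eq' F μ f]

/-- The content-weighted box-adding operator. -/
noncomputable def Nop (s : Module.Basis YoungDiagram ℚ L) : Module.End ℚ L :=
  Module.Basis.constr s ℚ (fun ν => ∑ μ ∈ coversAbove ν, (remContent ν μ : ℚ) • s μ)

lemma Nop_basis (s : Module.Basis YoungDiagram ℚ L) (ν : YoungDiagram) :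
    Nop s (s ν) = ∑ μ ∈ coversAbove ν, (remContent ν μ : ℚ) • s μ :=
  Module.Basis.constr_basis s ℚ _ ν

lemma repr_Nop (s : Module.Basis YoungDiagram ℚ L) (ν μ : YoungDiagram) :
    s.repr (Nop s (s ν)) μ = if Covers ν μ then (remContent ν μ : ℚ) else 0 := by
  rw [Nop_basis, repr_finsum]
  by_cases h : Covers ν μ
  · rw [if_pos (mem_coversAbove.2 h), if_pos h]
  · rw [if_neg (fun hh => h (mem_coversAbove.1 hh)), if_neg h]

lemma Nop_bot (s : Module.Basis YoungDiagram ℚ L) : Nop s (s ⊥) = 0 := by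
  rw [Nop_basis]
  apply Finset.sum_eq_zero
  intro μ hμ
  have hcov := mem_coversAbove.1 hμ
  have hcard : μ.cells.card = 1 := by
    have := hcov.2
    simpa using this
  obtain ⟨c, hc⟩ := Finset.card_eq_one.1 hcard
  have hc0 : c = (0, 0) := by
    have h00 : (0, 0) ∈ μ.cells := by
      have hcμ : c ∈ μ := by
        rw [← YoungDiagram.mem_cells, hc]; exact mem_singleton_self c
      exact (YoungDiagram.mem_cells _).1 (μ.up_left_mem (Nat.zero_le _) (Nat.zero_le _)
        (show (c.1, c.2) ∈ μ from hcμ))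
    rw [hc, mem_singleton] at h00
    exact h00.symm
  have : remContent ⊥ μ = 0 := by
    rw [remContent]
    have : μ.cells \ (⊥ : YoungDiagram).cells = {(0, 0)} := by
      rw [YoungDiagram.cells_bot, sdiff_empty, hc, hc0]
    rw [this, sum_singleton]
    simp
  rw [this]
  simp

end Alg

section Alg2

variable {L : Type*} [CommRing L] [Algebra ℚ L] (s : Module.Basis YoungDiagram ℚ L)

lemma pieri_eq
    (hPieri : ∀ (k : ℕ) (lam mu : YoungDiagram),
      s.repr (s (rowYD k) * s lam) mu =
        if mu.cells.card = lam.cells.card + k ∧ IsHStrip lam mu then 1 else 0)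
    (k : ℕ) (lam : YoungDiagram) :
    s (rowYD k) * s lam = ∑ μ ∈ pieriSet k lam, s μ := by
  have : ∑ μ ∈ pieriSet k lam, s μ = ∑ μ ∈ pieriSet k lam, (1 : ℚ) • s μ := by
    simp
  rw [this]
  apply s.repr.injective
  ext μ
  rw [hPieri, repr_finsum]
  by_cases h : μ ∈ pieriSet k lam
  · rw [if_pos h, if_pos (mem_pieriSet.1 h)]
  · rw [if_neg h, if_neg (fun hh => h (mem_pieriSet.2 hh))]

lemma repr_pieri
    (hPieri : ∀ (k : ℕ) (lam mu : YoungDiagram),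
      s.repr (s (rowYD k) * s lam) mu =
        if mu.cells.card = lam.cells.card + k ∧ IsHStrip lam mu then 1 else 0)
    (k : ℕ) (lam mu : YoungDiagram) :
    s.repr (s (rowYD k) * s lam) mu = if mu ∈ pieriSet k lam then 1 else 0 := by
  rw [hPieri]
  by_cases h : mu ∈ pieriSet k lam
  · rw [if_pos h, if_pos (mem_pieriSet.1 h)]
  · rw [if_neg h, if_neg (fun hh => h (mem_pieriSet.2 hh))]

lemma xi_adjoint
    (hPieri : ∀ (k : ℕ) (lam mu : YoungDiagram),
      s.repr (s (rowYD k) * s lam) mu =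
        if mu.cells.card = lam.cells.card + k ∧ IsHStrip lam mu then 1 else 0)
    (xi : Module.End ℚ L)
    (hxi : ∀ lam mu : YoungDiagram,
      s.repr (xi (s lam)) mu = if Covers mu lam then 1 else 0) :
    ∀ x y : L, pb s (xi x) y = pb s x (s (rowYD 1) * y) := by
  have h : (pb s).comp (xi : L →ₗ[ℚ] L) =
      (pb s).compl₂ (LinearMap.mulLeft ℚ (s (rowYD 1))) := by
    refine Module.Basis.ext s fun lam => Module.Basis.ext s fun mu => ?_
    simp only [LinearMap.comp_apply, LinearMap.compl₂_apply, LinearMap.mulLeft_apply]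
    rw [pb_basis_right, pb_basis_left, hxi, repr_pieri s hPieri]
    rw [pieriSet_one]
    by_cases h : Covers mu lam
    · rw [if_pos h, if_pos (mem_coversAbove.2 h)]
    · rw [if_neg h, if_neg (fun hh => h (mem_coversAbove.1 hh))]
  intro x y
  have := LinearMap.congr_fun (LinearMap.congr_fun h x) y
  simpa using this

lemma nabla_adjoint
    (nabla : Module.End ℚ L)
    (hnabla : ∀ lam mu : YoungDiagram,
      s.repr (nabla (s lam)) mu =
        if Covers mu lam then (remContent mu lam : ℚ) else 0) :
    ∀ x y : L, pb s (nabla x) y = pb s x (Nop s y) := by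
  have h : (pb s).comp (nabla : L →ₗ[ℚ] L) = (pb s).compl₂ (Nop s) := by
    refine Module.Basis.ext s fun lam => Module.Basis.ext s fun mu => ?_
    simp only [LinearMap.comp_apply, LinearMap.compl₂_apply]
    rw [pb_basis_right, pb_basis_left, hnabla, repr_Nop]
  intro x y
  have := LinearMap.congr_fun (LinearMap.congr_fun h x) y
  simpa using this

end Alg2

section Alg3

variable {L : Type*} [CommRing L] [Algebra ℚ L] (s : Module.Basis YoungDiagram ℚ L)

lemma leib_basis
    (hPieri : ∀ (k : ℕ) (lam mu : YoungDiagram),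
      s.repr (s (rowYD k) * s lam) mu =
        if mu.cells.card = lam.cells.card + k ∧ IsHStrip lam mu then 1 else 0)
    (k : ℕ) (lam : YoungDiagram) :
    Nop s (s (rowYD k) * s lam) + s (rowYD k) * (s (rowYD 1) * s lam)
      = ((k : ℚ) + 1) • (s (rowYD (k + 1)) * s lam) + s (rowYD k) * Nop s (s lam) := by
  apply s.repr.injective
  ext μ
  rw [map_add, map_add, Finsupp.add_apply, Finsupp.add_apply]
  have t1 : s.repr (Nop s (s (rowYD k) * s lam)) μ
      = ∑ ν ∈ pieriSet k lam, (if Covers ν μ then (remContent ν μ : ℚ) else 0) := by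
    rw [pieri_eq s hPieri, map_sum, map_sum, Finsupp.finset_sum_apply]
    exact Finset.sum_congr rfl (fun ν _ => repr_Nop s ν μ)
  have t2 : s.repr (s (rowYD k) * (s (rowYD 1) * s lam)) μ
      = ∑ τ ∈ coversAbove lam, (if μ ∈ pieriSet k τ then (1 : ℚ) else 0) := by
    rw [pieri_eq s hPieri 1 lam, pieriSet_one, Finset.mul_sum, map_sum,
      Finsupp.finset_sum_apply]
    exact Finset.sum_congr rfl (fun τ _ => repr_pieri s hPieri k τ μ)
  have t3 : s.repr (((k : ℚ) + 1) • (s (rowYD (k + 1)) * s lam)) μ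
      = ((k : ℚ) + 1) * (if μ ∈ pieriSet (k + 1) lam then 1 else 0) := by
    rw [map_smul, Finsupp.smul_apply, smul_eq_mul, repr_pieri s hPieri]
  have t4 : s.repr (s (rowYD k) * Nop s (s lam)) μ
      = ∑ τ ∈ coversAbove lam, (remContent lam τ : ℚ) * (if μ ∈ pieriSet k τ then 1 else 0) := by
    rw [Nop_basis, Finset.mul_sum, map_sum, Finsupp.finset_sum_apply]
    apply Finset.sum_congr rfl
    intro τ _
    rw [mul_smul_comm, map_smul, Finsupp.smul_apply, smul_eq_mul,
      repr_pieri s hPieri]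
  rw [t1, t2, t3, t4]
  have key := keyc k lam μ
  rw [Finset.sum_filter, Finset.sum_filter, ← Finset.sum_boole] at key
  have e : ∑ τ ∈ coversAbove lam, (if μ ∈ pieriSet k τ then (remContent lam τ : ℚ) else 0)
      = ∑ τ ∈ coversAbove lam, (remContent lam τ : ℚ) * (if μ ∈ pieriSet k τ then 1 else 0) := by
    apply Finset.sum_congr rfl
    intro τ _
    by_cases h : μ ∈ pieriSet k τ <;> simp [h]
  rw [e] at key
  exact key

end Alg3

/-- Delete the first row of a Young diagram. -/
def delRow (lam : YoungDiagram) : YoungDiagram where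
  cells := (lam.cells.filter (fun c => 1 ≤ c.1)).image (fun c => (c.1 - 1, c.2))
  isLowerSet := by
    intro x y hyx hx
    simp only [coe_image, coe_filter, Set.mem_image, Set.mem_setOf_eq, mem_coe] at hx ⊢
    obtain ⟨c, ⟨hc, hc1⟩, hce⟩ := hx
    obtain ⟨hy1, hy2⟩ : y.1 ≤ x.1 ∧ y.2 ≤ x.2 := Prod.le_def.mp hyx
    have hf := congrArg Prod.fst hce
    have hs := congrArg Prod.snd hce
    simp only at hf hs
    refine ⟨(y.1 + 1, y.2), ⟨?_, by omega⟩, by simp⟩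
    have : ((y.1 + 1 : ℕ), y.2) ∈ lam := lam.up_left_mem (by omega) (by omega)
      ((YoungDiagram.mem_cells _).1 (show (c.1, c.2) ∈ lam.cells from hc))
    exact (YoungDiagram.mem_cells _).1 this

lemma mem_delRow {lam : YoungDiagram} {c : ℕ × ℕ} :
    c ∈ (delRow lam).cells ↔ (c.1 + 1, c.2) ∈ lam.cells := by
  simp only [delRow, YoungDiagram.mem_mk, mem_image, mem_filter]
  constructor
  · rintro ⟨d, ⟨hd, hd1⟩, hde⟩
    have hf := congrArg Prod.fst hde
    have hs := congrArg Prod.snd hde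
    simp only at hf hs
    have : (c.1 + 1, c.2) = d := by apply Prod.ext <;> simp <;> omega
    rw [this]; exact hd
  · intro h
    exact ⟨(c.1 + 1, c.2), ⟨h, by simp⟩, by simp⟩

lemma delRow_subset (lam : YoungDiagram) : (delRow lam).cells ⊆ lam.cells := by
  intro c hc
  rw [mem_delRow] at hc
  exact (YoungDiagram.mem_cells _).1
    (lam.up_left_mem (Nat.le_succ _) le_rfl ((YoungDiagram.mem_cells _).2 hc))

lemma delRow_card (lam : YoungDiagram) :
    lam.cells.card = (delRow lam).cells.card + lam.rowLen 0 := by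
  have hinj : Set.InjOn (fun c : ℕ × ℕ => (c.1 - 1, c.2))
      (lam.cells.filter (fun c => 1 ≤ c.1)) := by
    intro c hc c' hc' he
    simp only [coe_filter, Set.mem_setOf_eq] at hc hc'
    have hf := congrArg Prod.fst he
    have hs := congrArg Prod.snd he
    simp only at hf hs
    apply Prod.ext <;> omega
  have h1 : (delRow lam).cells.card = (lam.cells.filter (fun c => 1 ≤ c.1)).card := by
    show ((lam.cells.filter (fun c => 1 ≤ c.1)).image _).card = _
    exact card_image_of_injOn hinj
  have h2 : (lam.cells.filter (fun c => c.1 = 0)).card = lam.rowLen 0 := by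
    rw [lam.rowLen_eq_card]
    congr 1
  have h3 := Finset.card_filter_add_card_filter_not
    (s := lam.cells) (p := fun c => c.1 = 0)
  have h4 : lam.cells.filter (fun c => ¬(c.1 = 0)) = lam.cells.filter (fun c => 1 ≤ c.1) := by
    apply filter_congr
    intro c _
    constructor
    · intro h; omega
    · intro h; omega
  rw [h4] at h3
  omega

lemma strip_delRow (lam : YoungDiagram) : lam ∈ pieriSet (lam.rowLen 0) (delRow lam) := by
  rw [mem_pieriSet]
  refine ⟨by have := delRow_card lam; omega, delRow_subset lam, ?_⟩
  intro c hc hcd hbelow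
  apply hcd
  rw [mem_delRow]
  simpa using hbelow

lemma strip_snd_injOn {ν μ : YoungDiagram} (hstrip : IsHStrip ν μ) :
    Set.InjOn (Prod.snd : ℕ × ℕ → ℕ) (((μ.cells \ ν.cells) : Finset (ℕ × ℕ)) : Set (ℕ × ℕ)) := by
  intro c hc c' hc' he
  simp only [coe_sdiff, Set.mem_diff, mem_coe] at hc hc'
  rcases lt_trichotomy c.1 c'.1 with h | h | h
  · exfalso
    have : (c.1 + 1, c.2) ∈ μ.cells := (YoungDiagram.mem_cells _).1
      (μ.up_left_mem (by omega) (le_of_eq he) ((YoungDiagram.mem_cells _).2 hc'.1))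
    exact hstrip.2 c hc.1 hc.2 this
  · exact Prod.ext h he
  · exfalso
    have : (c'.1 + 1, c'.2) ∈ μ.cells := (YoungDiagram.mem_cells _).1
      (μ.up_left_mem (by omega) (le_of_eq he.symm) ((YoungDiagram.mem_cells _).2 hc.1))
    exact hstrip.2 c' hc'.1 hc'.2 this

lemma snd_mem_rowLen {μ : YoungDiagram} {c : ℕ × ℕ} (hc : c ∈ μ.cells) :
    c.2 < μ.rowLen 0 := by
  have : (0, c.2) ∈ μ := μ.up_left_mem (Nat.zero_le _) le_rfl
    ((YoungDiagram.mem_cells _).2 hc)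
  exact YoungDiagram.mem_iff_lt_rowLen.1 this

lemma pieri_rowLen_ge {ν μ : YoungDiagram} {r : ℕ} (h : μ ∈ pieriSet r ν) :
    r ≤ μ.rowLen 0 := by
  rw [mem_pieriSet] at h
  have hsub := h.2.1
  have hDcard : (μ.cells \ ν.cells).card = r := by rw [card_sdiff_of_subset hsub]; omega
  have hinj := strip_snd_injOn h.2
  have him : (μ.cells \ ν.cells).image Prod.snd ⊆ Finset.range (μ.rowLen 0) := by
    intro j hj
    obtain ⟨c, hc, rfl⟩ := mem_image.1 hj
    exact mem_range.2 (snd_mem_rowLen (mem_sdiff.1 hc).1)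
  calc r = ((μ.cells \ ν.cells).image Prod.snd).card := by
        rw [card_image_of_injOn hinj, hDcard]
    _ ≤ (Finset.range (μ.rowLen 0)).card := card_le_card him
    _ = μ.rowLen 0 := card_range _

lemma colLen_filter (ν : YoungDiagram) (j : ℕ) :
    ν.colLen j = (ν.cells.filter (fun c => c.2 = j)).card := by
  rw [ν.colLen_eq_card]
  congr 1

lemma colLen_delRow (lam : YoungDiagram) (j : ℕ) :
    lam.colLen j = (delRow lam).colLen j + (if j < lam.rowLen 0 then 1 else 0) := by
  by_cases hj : j < lam.rowLen 0
  · rw [if_pos hj]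
    have h1 : ∀ i, i < (delRow lam).colLen j ↔ i + 1 < lam.colLen j := by
      intro i
      rw [← YoungDiagram.mem_iff_lt_colLen, ← YoungDiagram.mem_iff_lt_colLen,
        ← YoungDiagram.mem_cells, mem_delRow]
      simp [YoungDiagram.mem_cells]
    have hb : 0 < lam.colLen j := by
      rw [← YoungDiagram.mem_iff_lt_colLen]
      exact YoungDiagram.mem_iff_lt_rowLen.2 hj
    have ha := h1 ((delRow lam).colLen j)
    have hb' := h1 (lam.colLen j - 1)
    omega
  · rw [if_neg hj]
    have hb : lam.colLen j = 0 := by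
      by_contra hc
      have : (0, j) ∈ lam := YoungDiagram.mem_iff_lt_colLen.2 (by omega)
      exact hj (YoungDiagram.mem_iff_lt_rowLen.1 this)
    have ha : (delRow lam).colLen j = 0 := by
      by_contra hc
      have : (0, j) ∈ (delRow lam).cells := (YoungDiagram.mem_cells _).1
        (YoungDiagram.mem_iff_lt_colLen.2 (by omega))
      rw [mem_delRow] at this
      have : (0, j) ∈ lam := lam.up_left_mem (Nat.zero_le _) le_rfl
        ((YoungDiagram.mem_cells _).2 this)
      rw [YoungDiagram.mem_iff_lt_colLen] at this
      omega
    omega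

lemma eq_of_colLen {μ lam : YoungDiagram} (h : ∀ j, μ.colLen j = lam.colLen j) :
    μ = lam := by
  apply YoungDiagram.ext
  ext c
  obtain ⟨i, j⟩ := c
  rw [YoungDiagram.mem_cells, YoungDiagram.mem_cells, YoungDiagram.mem_iff_lt_colLen,
    YoungDiagram.mem_iff_lt_colLen, h j]

lemma pieri_rowLen_eq {lam μ : YoungDiagram}
    (h : μ ∈ pieriSet (lam.rowLen 0) (delRow lam)) (he : μ.rowLen 0 = lam.rowLen 0) :
    μ = lam := by
  set r := lam.rowLen 0 with hrdef
  set ν := delRow lam with hνdef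
  rw [mem_pieriSet] at h
  have hsub := h.2.1
  set D := μ.cells \ ν.cells with hDdef
  have hDcard : D.card = r := by rw [hDdef, card_sdiff_of_subset hsub]; omega
  have hinj := strip_snd_injOn h.2
  have him : D.image Prod.snd = Finset.range r := by
    apply Finset.eq_of_subset_of_card_le
    · intro j hj
      obtain ⟨c, hc, rfl⟩ := mem_image.1 hj
      exact mem_range.2 (by rw [← he]; exact snd_mem_rowLen (mem_sdiff.1 hc).1)
    · rw [card_range, card_image_of_injOn hinj, hDcard]
  have hcount : ∀ j, (D.filter (fun c => c.2 = j)).card = if j < r then 1 else 0 := by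
    intro j
    by_cases hj : j < r
    · rw [if_pos hj]
      have hjm : j ∈ D.image Prod.snd := by rw [him]; exact mem_range.2 hj
      obtain ⟨c, hc, rfl⟩ := mem_image.1 hjm
      have hne : (D.filter (fun d => d.2 = c.2)).Nonempty := ⟨c, mem_filter.2 ⟨hc, rfl⟩⟩
      have hle : (D.filter (fun d => d.2 = c.2)).card ≤ 1 := by
        rw [Finset.card_le_one]
        intro a ha b hb
        have ha' := mem_filter.1 ha
        have hb' := mem_filter.1 hb
        exact hinj (by exact_mod_cast ha'.1) (by exact_mod_cast hb'.1)
          (ha'.2.trans hb'.2.symm)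
      have := Finset.card_pos.2 hne
      omega
    · rw [if_neg hj]
      rw [Finset.card_eq_zero, filter_eq_empty_iff]
      intro c hc hcj
      apply hj
      have : c.2 ∈ D.image Prod.snd := mem_image.2 ⟨c, hc, rfl⟩
      rw [him, mem_range] at this
      omega
  have hcol : ∀ j, μ.colLen j = lam.colLen j := by
    intro j
    have hsplit : μ.cells.filter (fun c => c.2 = j)
        = ν.cells.filter (fun c => c.2 = j) ∪ D.filter (fun c => c.2 = j) := by
      rw [← filter_union, union_sdiff_of_subset hsub]
    have hdisj : Disjoint (ν.cells.filter (fun c => c.2 = j)) (D.filter (fun c => c.2 = j)) :=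
      Disjoint.mono (filter_subset _ _) (filter_subset _ _) disjoint_sdiff_self_right
    have : μ.colLen j = ν.colLen j + (D.filter (fun c => c.2 = j)).card := by
      rw [colLen_filter, colLen_filter, hsplit, card_union_of_disjoint hdisj]
    rw [this, hcount j, colLen_delRow lam j]
  exact eq_of_colLen hcol

lemma rowLen_le_card (μ : YoungDiagram) : μ.rowLen 0 ≤ μ.cells.card := by
  rw [μ.rowLen_eq_card]
  exact card_le_card (filter_subset _ _)

lemma rowLen_pos {lam : YoungDiagram} (h : lam ≠ ⊥) : 1 ≤ lam.rowLen 0 := by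
  have : lam.cells.Nonempty := by
    rw [Finset.nonempty_iff_ne_empty]
    intro he
    exact h (YoungDiagram.ext he)
  obtain ⟨c, hc⟩ := this
  have : (0, 0) ∈ lam := lam.up_left_mem (Nat.zero_le _) (Nat.zero_le _)
    ((YoungDiagram.mem_cells _).2 hc)
  have := YoungDiagram.mem_iff_lt_rowLen.1 this
  omega

section Alg4

variable {L : Type*} [CommRing L] [Algebra ℚ L] (s : Module.Basis YoungDiagram ℚ L)

/-- `g` satisfies the Leibniz rule against the operator `Nop s`. -/
def Ader (g : L) : Prop := ∀ y : L, Nop s (g * y) = Nop s g * y + g * Nop s y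

lemma Nop_one (hone : s (⊥ : YoungDiagram) = 1) : Nop s (1 : L) = 0 := by
  rw [← hone, Nop_bot]

lemma ader_one (hone : s (⊥ : YoungDiagram) = 1) : Ader s (1 : L) := by
  intro y
  rw [one_mul, Nop_one s hone, zero_mul, zero_add, one_mul]

lemma ader_zero : Ader s (0 : L) := by
  intro y
  rw [zero_mul, map_zero, zero_mul, zero_add, zero_mul]

lemma ader_add {g g' : L} (hg : Ader s g) (hg' : Ader s g') : Ader s (g + g') := by
  intro y
  rw [add_mul, map_add, hg y, hg' y, map_add]
  ring

lemma ader_smul (c : ℚ) {g : L} (hg : Ader s g) : Ader s (c • g) := by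
  intro y
  rw [smul_mul_assoc, map_smul, hg y, map_smul, smul_add, smul_mul_assoc, smul_mul_assoc]

lemma ader_mul {g g' : L} (hg : Ader s g) (hg' : Ader s g') : Ader s (g * g') := by
  intro y
  have h1 : Nop s (g * g') = Nop s g * g' + g * Nop s g' := hg g'
  calc Nop s (g * g' * y) = Nop s (g * (g' * y)) := by rw [mul_assoc]
    _ = Nop s g * (g' * y) + g * Nop s (g' * y) := hg _
    _ = Nop s g * (g' * y) + g * (Nop s g' * y + g' * Nop s y) := by rw [hg' y]
    _ = (Nop s g * g' + g * Nop s g') * y + g * g' * Nop s y := by ring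
    _ = Nop s (g * g') * y + g * g' * Nop s y := by rw [← h1]

/-- The submodule of elements satisfying the Leibniz rule. -/
def aderSub : Submodule ℚ L where
  carrier := {g | Ader s g}
  zero_mem' := ader_zero s
  add_mem' := fun h h' => ader_add s h h'
  smul_mem' := fun c _ h => ader_smul s c h

lemma ader_hk
    (hone : s (⊥ : YoungDiagram) = 1)
    (hPieri : ∀ (k : ℕ) (lam mu : YoungDiagram),
      s.repr (s (rowYD k) * s lam) mu =
        if mu.cells.card = lam.cells.card + k ∧ IsHStrip lam mu then 1 else 0)
    (k : ℕ) : Ader s (s (rowYD k)) := by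
  have hAB : (Nop s) ∘ₗ (LinearMap.mulLeft ℚ (s (rowYD k)))
        + (LinearMap.mulLeft ℚ (s (rowYD k))) ∘ₗ (LinearMap.mulLeft ℚ (s (rowYD 1)))
      = ((k : ℚ) + 1) • (LinearMap.mulLeft ℚ (s (rowYD (k + 1))))
        + (LinearMap.mulLeft ℚ (s (rowYD k))) ∘ₗ (Nop s) := by
    refine Module.Basis.ext s fun lam => ?_
    simp only [LinearMap.add_apply, LinearMap.comp_apply, LinearMap.mulLeft_apply,
      LinearMap.smul_apply]
    exact leib_basis s hPieri k lam
  have hstar : ∀ y : L, Nop s (s (rowYD k) * y) + s (rowYD k) * (s (rowYD 1) * y)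
      = ((k : ℚ) + 1) • (s (rowYD (k + 1)) * y) + s (rowYD k) * Nop s y := by
    intro y
    have := LinearMap.congr_fun hAB y
    simpa using this
  have hNg : Nop s (s (rowYD k))
      = ((k : ℚ) + 1) • s (rowYD (k + 1)) - s (rowYD k) * s (rowYD 1) := by
    have h := hstar 1
    rw [mul_one, mul_one, mul_one, Nop_one s hone, mul_zero, add_zero] at h
    exact eq_sub_of_add_eq h
  intro y
  have h2 : Nop s (s (rowYD k) * y)
      = (((k : ℚ) + 1) • (s (rowYD (k + 1)) * y) + s (rowYD k) * Nop s y)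
        - s (rowYD k) * (s (rowYD 1) * y) := eq_sub_of_add_eq (hstar y)
  rw [h2, hNg, sub_mul, smul_mul_assoc, mul_assoc]
  abel

lemma ader_basis
    (hone : s (⊥ : YoungDiagram) = 1)
    (hPieri : ∀ (k : ℕ) (lam mu : YoungDiagram),
      s.repr (s (rowYD k) * s lam) mu =
        if mu.cells.card = lam.cells.card + k ∧ IsHStrip lam mu then 1 else 0) :
    ∀ lam : YoungDiagram, Ader s (s lam) := by
  suffices h : ∀ n lam, lam.cells.card * (lam.cells.card + 1)
      + (lam.cells.card - lam.rowLen 0) = n → Ader s (s lam) by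
    exact fun lam => h _ lam rfl
  intro n
  induction n using Nat.strong_induction_on with
  | _ n ih =>
    intro lam hm
    by_cases hbot : lam = ⊥
    · rw [hbot, hone]
      exact ader_one s hone
    have hr1 : 1 ≤ lam.rowLen 0 := rowLen_pos hbot
    have hcard := delRow_card lam
    have hrc := rowLen_le_card lam
    -- expand via Pieri
    have hmem : lam ∈ pieriSet (lam.rowLen 0) (delRow lam) := strip_delRow lam
    have hsplit : s (rowYD (lam.rowLen 0)) * s (delRow lam)
        = s lam + ∑ μ ∈ (pieriSet (lam.rowLen 0) (delRow lam)).erase lam, s μ := by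
      rw [pieri_eq s hPieri, ← Finset.add_sum_erase _ _ hmem]
    have hlam : s lam = s (rowYD (lam.rowLen 0)) * s (delRow lam)
        - ∑ μ ∈ (pieriSet (lam.rowLen 0) (delRow lam)).erase lam, s μ := by
      rw [hsplit]; ring
    -- measure of delRow
    have hν : Ader s (s (delRow lam)) := by
      apply ih _ ?_ (delRow lam) rfl
      set a := (delRow lam).cells.card with hadef
      set b := lam.cells.card with hbdef
      have hab : a + 1 ≤ b := by omega
      have h1 : a * (a + 1) + (a - (delRow lam).rowLen 0) ≤ a * (a + 1) + a := by
        have := Nat.sub_le a ((delRow lam).rowLen 0)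
        omega
      have h2 : (a + 1) * (a + 2) = a * (a + 1) + 2 * a + 2 := by ring
      have h3 : (a + 1) * (a + 2) ≤ b * (b + 1) :=
        Nat.mul_le_mul hab (by omega)
      omega
    have hprod : Ader s (s (rowYD (lam.rowLen 0)) * s (delRow lam)) :=
      ader_mul s (ader_hk s hone hPieri _) hν
    have hsum : Ader s (∑ μ ∈ (pieriSet (lam.rowLen 0) (delRow lam)).erase lam, s μ) := by
      have : (∑ μ ∈ (pieriSet (lam.rowLen 0) (delRow lam)).erase lam, s μ) ∈ aderSub s := by
        apply Submodule.sum_mem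
        intro μ hμ
        have hμ' := Finset.mem_of_mem_erase hμ
        have hμne := Finset.ne_of_mem_erase hμ
        have hμcard : μ.cells.card = lam.cells.card := by
          have := (mem_pieriSet.1 hμ').1
          omega
        have hμrow : lam.rowLen 0 < μ.rowLen 0 := by
          rcases Nat.lt_or_ge (lam.rowLen 0) (μ.rowLen 0) with h | h
          · exact h
          · exfalso
            have hge := pieri_rowLen_ge hμ'
            exact hμne (pieri_rowLen_eq hμ' (by omega))
        have hμrc := rowLen_le_card μ
        show Ader s (s μ)
        apply ih _ ?_ μ rfl
        rw [hμcard]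
        have : lam.cells.card - μ.rowLen 0 < lam.cells.card - lam.rowLen 0 := by omega
        omega
      exact this
    rw [hlam]
    have : (s (rowYD (lam.rowLen 0)) * s (delRow lam)
        - ∑ μ ∈ (pieriSet (lam.rowLen 0) (delRow lam)).erase lam, s μ) ∈ aderSub s :=
      Submodule.sub_mem _ hprod hsum
    exact this

lemma ader_all
    (hone : s (⊥ : YoungDiagram) = 1)
    (hPieri : ∀ (k : ℕ) (lam mu : YoungDiagram),
      s.repr (s (rowYD k) * s lam) mu =
        if mu.cells.card = lam.cells.card + k ∧ IsHStrip lam mu then 1 else 0) :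
    ∀ g : L, Ader s g := by
  intro g
  have hspan : Submodule.span ℚ (Set.range s) ≤ aderSub s := by
    rw [Submodule.span_le]
    rintro _ ⟨lam, rfl⟩
    exact ader_basis s hone hPieri lam
  have : g ∈ aderSub s := hspan (by rw [Module.Basis.span_eq]; trivial)
  exact this

end Alg4

section Alg5

variable {L : Type*} [CommRing L] [Algebra ℚ L] (s : Module.Basis YoungDiagram ℚ L)

lemma rho_adjoint
    (hone : s (⊥ : YoungDiagram) = 1)
    (hPieri : ∀ (k : ℕ) (lam mu : YoungDiagram),
      s.repr (s (rowYD k) * s lam) mu =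
        if mu.cells.card = lam.cells.card + k ∧ IsHStrip lam mu then 1 else 0)
    (xi : Module.End ℚ L)
    (hxi : ∀ lam mu : YoungDiagram,
      s.repr (xi (s lam)) mu = if Covers mu lam then 1 else 0)
    (nabla : Module.End ℚ L)
    (hnabla : ∀ lam mu : YoungDiagram,
      s.repr (nabla (s lam)) mu =
        if Covers mu lam then (remContent mu lam : ℚ) else 0) :
    ∀ n : ℕ, ∃ g : L, ∀ x y : L, pb s (rhoOp xi nabla n x) y = pb s x (g * y) := by
  intro n
  induction n with
  | zero => exact ⟨s (rowYD 1), xi_adjoint s hPieri xi hxi⟩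
  | succ n ih =>
    obtain ⟨g, hg⟩ := ih
    refine ⟨((n : ℚ) + 1)⁻¹ • Nop s g, ?_⟩
    intro x y
    have happ : rhoOp xi nabla (n + 1) x
        = ((n : ℚ) + 1)⁻¹ • (rhoOp xi nabla n (nabla x) - nabla (rhoOp xi nabla n x)) := by
      show (((n : ℚ) + 1)⁻¹ • (rhoOp xi nabla n * nabla - nabla * rhoOp xi nabla n)) x = _
      simp [LinearMap.sub_apply, Module.End.mul_apply]
    rw [happ]
    rw [map_smul, LinearMap.smul_apply, smul_eq_mul]
    rw [map_sub, LinearMap.sub_apply]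
    have h1 : pb s (rhoOp xi nabla n (nabla x)) y = pb s x (Nop s (g * y)) := by
      rw [hg, nabla_adjoint s nabla hnabla]
    have h2 : pb s (nabla (rhoOp xi nabla n x)) y = pb s x (g * Nop s y) := by
      rw [nabla_adjoint s nabla hnabla, hg]
    rw [h1, h2]
    have hleib := ader_all s hone hPieri g y
    have h3 : Nop s (g * y) - g * Nop s y = Nop s g * y := by rw [hleib]; ring
    have h4 : pb s x (Nop s (g * y)) - pb s x (g * Nop s y) = pb s x (Nop s g * y) := by
      rw [← map_sub, h3]
    rw [h4]
    have h5 : (((n : ℚ) + 1)⁻¹ • Nop s g) * y = ((n : ℚ) + 1)⁻¹ • (Nop s g * y) :=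
      smul_mul_assoc _ _ _
    rw [h5, map_smul, smul_eq_mul]

end Alg5

end RhoAux

/-- The bosonic operators `ρ⁽ᵏ⁾` commute pairwise. -/
theorem rho_commute
    {L : Type*} [CommRing L] [Algebra ℚ L]
    (s : Module.Basis YoungDiagram ℚ L)
    (hone : s (⊥ : YoungDiagram) = 1)
    (hPieri : ∀ (k : ℕ) (lam mu : YoungDiagram),
      s.repr (s (rowYD k) * s lam) mu =
        if mu.cells.card = lam.cells.card + k ∧ IsHStrip lam mu then 1 else 0)
    (xi : Module.End ℚ L)
    (hxi : ∀ lam mu : YoungDiagram,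
      s.repr (xi (s lam)) mu = if Covers mu lam then 1 else 0)
    (nabla : Module.End ℚ L)
    (hnabla : ∀ lam mu : YoungDiagram,
      s.repr (nabla (s lam)) mu =
        if Covers mu lam then (remContent mu lam : ℚ) else 0)
    : ∀ j k : ℕ,
      rhoOp xi nabla j * rhoOp xi nabla k = rhoOp xi nabla k * rhoOp xi nabla j := by
  intro j k
  obtain ⟨gj, hgj⟩ := RhoAux.rho_adjoint s hone hPieri xi hxi nabla hnabla j
  obtain ⟨gk, hgk⟩ := RhoAux.rho_adjoint s hone hPieri xi hxi nabla hnabla k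
  apply LinearMap.ext
  intro x
  apply s.repr.injective
  ext μ
  rw [← RhoAux.pb_basis_right s _ μ, ← RhoAux.pb_basis_right s _ μ]
  rw [Module.End.mul_apply, Module.End.mul_apply]
  rw [hgj, hgk, hgk, hgj]
  rw [mul_left_comm]
end
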